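/- arXiv:2412.20712 — 9 statements merged into one kernel-verified Lean document; each statement's English description precedes it below -/
import Mathlib

section
/- Let n be a nonnegative integer, let ζ ∈ ℂ with ζ ≠ 0, and let A ∈ ℝ with A ≥ 1. Then min{ |ζ|^{−n}, A^n/n! } ≤ (3/2)·A^n/⟨ζ⟩^n, where ⟨ζ⟩ = (1+|ζ|²)^{1/2}. -/
/-!
Write `r = |ζ|`. The theorem follows from `⟨ζ⟩^n ≤ (3/2) max (r^n, n!)`, i.e. from
`(1 + u)^n ≤ (9/4) max (u^n, (n!)^2)` for `u = r^2 ≥ 0`. Above a threshold `v` (about `5n/4`)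
the ratio `((1 + u)/u)^n ≤ exp (n/u) ≤ exp (4/5) ≤ 9/4` gives the first bound; below it,
`(1 + v)^n ≤ (9/4) (n!)^2` is proved by induction on `n`, using `(1 + x)^n ≤ exp (n x)` and `e < 3`,
with the small cases `n ≤ 3` checked by hand.
-/

open Real Nat

lemma one_add_pow_le_exp_mul {x : ℝ} (hx : 0 ≤ x) (n : ℕ) : (1 + x) ^ n ≤ exp (n * x) := by
  rw [exp_nat_mul]
  exact pow_le_pow_left₀ (by linarith) (by linarith [add_one_le_exp x]) n

lemma exp_four_fifths_le : exp (4 / 5) ≤ 9 / 4 := by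
  have h : exp (4 / 5) ^ 5 ≤ (9 / 4) ^ 5 :=
    calc exp (4 / 5) ^ 5 = exp 1 ^ 4 := by rw [← exp_nat_mul, ← exp_nat_mul]; norm_num
      _ ≤ 2.7182818286 ^ 4 := pow_le_pow_left₀ (exp_pos 1).le exp_one_lt_d9.le 4
      _ ≤ (9 / 4) ^ 5 := by norm_num
  exact le_of_pow_le_pow_left₀ (by norm_num) (by norm_num) h

/-- `(1 + u) / u` decreases in `u`, so a bound `(1 + v)^n ≤ c v^n` propagates to all `u ≥ v`. -/
lemma one_add_pow_le_mul_pow_of_le {n : ℕ} {c u v : ℝ} (hv : 0 < v) (hvu : v ≤ u)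
    (h : (1 + v) ^ n ≤ c * v ^ n) : (1 + u) ^ n ≤ c * u ^ n := by
  have hu : 0 ≤ u := hv.le.trans hvu
  have hratio : ((1 + u) * v) ^ n ≤ ((1 + v) * u) ^ n :=
    pow_le_pow_left₀ (by positivity) (by nlinarith) n
  have : (1 + u) ^ n * v ^ n ≤ c * u ^ n * v ^ n := by
    calc (1 + u) ^ n * v ^ n = ((1 + u) * v) ^ n := (mul_pow _ _ _).symm
      _ ≤ ((1 + v) * u) ^ n := hratio
      _ = (1 + v) ^ n * u ^ n := mul_pow _ _ _
      _ ≤ c * v ^ n * u ^ n := by gcongr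
      _ = c * u ^ n * v ^ n := by ring
  exact le_of_mul_le_mul_right this (by positivity)

lemma one_add_pow_le_mul_max {n : ℕ} {c u v M : ℝ} (hu : 0 ≤ u) (hv : 0 < v)
    (hlarge : (1 + v) ^ n ≤ c * v ^ n) (hsmall : (1 + v) ^ n ≤ c * M) :
    (1 + u) ^ n ≤ c * max (u ^ n) M := by
  have hc : 0 ≤ c := nonneg_of_mul_nonneg_left ((by positivity : (0 : ℝ) ≤ _).trans hlarge)
    (by positivity)
  rcases le_total v u with hvu | huv
  · exact (one_add_pow_le_mul_pow_of_le hv hvu hlarge).trans (by gcongr; exact le_max_left _ _)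
  · calc (1 + u) ^ n ≤ (1 + v) ^ n := by gcongr
      _ ≤ c * M := hsmall
      _ ≤ c * max (u ^ n) M := by gcongr; exact le_max_right _ _

lemma one_add_five_mul_div_four_pow_le {n : ℕ} (hn : 1 ≤ n) :
    (1 + 5 * n / 4 : ℝ) ^ n ≤ 9 / 4 * (5 * n / 4 : ℝ) ^ n := by
  set v : ℝ := 5 * n / 4 with hv_def
  have hv : 0 < v := by positivity
  calc (1 + v) ^ n = (1 + v⁻¹) ^ n * v ^ n := by
        rw [← mul_pow, add_mul, inv_mul_cancel₀ hv.ne', one_mul, add_comm]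
    _ ≤ exp (n * v⁻¹) * v ^ n := by
        gcongr; exact one_add_pow_le_exp_mul (by positivity) n
    _ = exp (4 / 5) * v ^ n := by
        rw [hv_def]; congr 2; field_simp
    _ ≤ 9 / 4 * v ^ n := by gcongr; exact exp_four_fifths_le

lemma one_add_five_mul_div_four_pow_le_factorial_sq {n : ℕ} (hn : 4 ≤ n) :
    (1 + 5 * n / 4 : ℝ) ^ n ≤ 9 / 4 * (n ! : ℝ) ^ 2 := by
  induction n, hn using Nat.le_induction with
  | base => norm_num [Nat.factorial]
  | succ n hn ih =>
    set a : ℝ := 1 + 5 * n / 4 with ha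
    have hn4 : (4 : ℝ) ≤ n := by exact_mod_cast hn
    have ha0 : 0 < a := by positivity
    have hexp : (a + 5 / 4) ^ n ≤ 3 * a ^ n :=
      calc (a + 5 / 4) ^ n = (1 + 5 / (4 * a)) ^ n * a ^ n := by
            rw [← mul_pow]; congr 1; field_simp
        _ ≤ exp (n * (5 / (4 * a))) * a ^ n := by
            gcongr; exact one_add_pow_le_exp_mul (by positivity) n
        _ ≤ exp 1 * a ^ n := by
            gcongr
            rw [← mul_div_assoc, div_le_one (by positivity)]
            linarith
        _ ≤ 3 * a ^ n := by gcongr; exact exp_one_lt_three.le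
    calc (1 + 5 * ((n + 1 : ℕ) : ℝ) / 4) ^ (n + 1) = (a + 5 / 4) * (a + 5 / 4) ^ n := by
          push_cast; ring
      _ ≤ (a + 5 / 4) * (3 * a ^ n) := by gcongr
      _ ≤ ((n : ℝ) + 1) ^ 2 * a ^ n := by
          rw [← mul_assoc]; gcongr; nlinarith
      _ ≤ ((n : ℝ) + 1) ^ 2 * (9 / 4 * (n ! : ℝ) ^ 2) := by gcongr
      _ = 9 / 4 * ((n + 1)! : ℝ) ^ 2 := by push_cast [Nat.factorial_succ]; ring

/-- For `n ≥ 4` the threshold `5n/4` works; `n = 2`, `v = 2` is the equality case of the theorem. -/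
lemma exists_one_add_pow_le (n : ℕ) :
    ∃ v : ℝ, 0 < v ∧ (1 + v) ^ n ≤ 9 / 4 * v ^ n ∧ (1 + v) ^ n ≤ 9 / 4 * (n ! : ℝ) ^ 2 := by
  match n with
  | 0 => exact ⟨1, by norm_num⟩
  | 1 => exact ⟨1, by norm_num⟩
  | 2 => exact ⟨2, by norm_num [Nat.factorial]⟩
  | 3 => exact ⟨13 / 4, by norm_num [Nat.factorial]⟩
  | n + 4 =>
    exact ⟨5 * ((n + 4 : ℕ) : ℝ) / 4, by positivity,
      one_add_five_mul_div_four_pow_le (by omega),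
      one_add_five_mul_div_four_pow_le_factorial_sq (by omega)⟩

lemma one_add_pow_le_max_factorial_sq (n : ℕ) {u : ℝ} (hu : 0 ≤ u) :
    (1 + u) ^ n ≤ 9 / 4 * max (u ^ n) ((n ! : ℝ) ^ 2) := by
  obtain ⟨v, hv, hlarge, hsmall⟩ := exists_one_add_pow_le n
  exact one_add_pow_le_mul_max hu hv hlarge hsmall

lemma sqrt_one_add_sq_pow_le (n : ℕ) {r : ℝ} (hr : 0 ≤ r) :
    √(1 + r ^ 2) ^ n ≤ 3 / 2 * max (r ^ n) (n ! : ℝ) := by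
  rw [← pow_le_pow_iff_left₀ (by positivity) (by positivity) two_ne_zero, ← pow_mul, mul_comm,
    pow_mul, sq_sqrt (by positivity), mul_pow]
  calc (1 + r ^ 2) ^ n ≤ 9 / 4 * max ((r ^ 2) ^ n) ((n ! : ℝ) ^ 2) :=
        one_add_pow_le_max_factorial_sq n (by positivity)
    _ = (3 / 2) ^ 2 * max ((r ^ n) ^ 2) ((n ! : ℝ) ^ 2) := by
        rw [← pow_mul, mul_comm 2, pow_mul]; norm_num
    _ ≤ (3 / 2) ^ 2 * max (r ^ n) (n ! : ℝ) ^ 2 := by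
        gcongr
        exact max_le (by gcongr; exact le_max_left _ _) (by gcongr; exact le_max_right _ _)

theorem stmt5_general (n : ℕ) (ζ : ℂ) (A : ℝ) (hA : 1 ≤ A) :
    min ((‖ζ‖)⁻¹ ^ n) (A ^ n / n.factorial) ≤
      (3 / 2) * A ^ n / Real.sqrt (1 + ‖ζ‖ ^ 2) ^ n := by
  set r := ‖ζ‖
  set m := min (r⁻¹ ^ n) (A ^ n / n !)
  have hAn : 1 ≤ A ^ n := one_le_pow₀ hA
  have hm : 0 ≤ m := le_min (by positivity) (by positivity)
  rw [le_div_iff₀ (by positivity)]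
  calc m * √(1 + r ^ 2) ^ n ≤ m * (3 / 2 * max (r ^ n) (n ! : ℝ)) := by
        gcongr; exact sqrt_one_add_sq_pow_le n (norm_nonneg ζ)
    _ = 3 / 2 * max (m * r ^ n) (m * n !) := by rw [mul_left_comm, mul_max_of_nonneg _ _ hm]
    _ ≤ 3 / 2 * A ^ n := by
        gcongr
        refine max_le ?_ ?_
        · calc m * r ^ n ≤ r⁻¹ ^ n * r ^ n := by gcongr; exact min_le_left _ _
            _ = (r⁻¹ * r) ^ n := (mul_pow _ _ _).symm
            _ ≤ A ^ n := (pow_le_one₀ (by positivity) inv_mul_le_one).trans hAn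
        · calc m * n ! ≤ A ^ n / n ! * n ! := by gcongr; exact min_le_right _ _
            _ = A ^ n := div_mul_cancel₀ _ (by positivity)

/-- for `n ∈ ℕ`, `ζ ∈ ℂ∖{0}`, `A ≥ 1`,
`min{|ζ|^{−n}, A^n/n!} ≤ (3/2)·A^n/⟨ζ⟩^n` where `⟨ζ⟩ = (1+|ζ|²)^{1/2}`. -/
theorem stmt5 (n : ℕ) (ζ : ℂ) (hζ : ζ ≠ 0) (A : ℝ) (hA : 1 ≤ A) :
    min ((‖ζ‖)⁻¹ ^ n) (A ^ n / n.factorial) ≤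
      (3 / 2) * A ^ n / Real.sqrt (1 + ‖ζ‖ ^ 2) ^ n :=
  stmt5_general n ζ A hA
end

section
/- For every integer n ≥ 1 one has (1 + (n!)^{2/n})^{n/2} ≤ (3/2)·n!, i.e., the quantity ⟨(n!)^{1/n}⟩^n/n! is at most 3/2 for all n ≥ 1, where ⟨t⟩ = (1+t²)^{1/2} for t ∈ ℝ; moreover equality holds at n = 2. -/
/-!
Put `B = (n!)^{2/n}`, so that `B^n = (n!)^2` and the claim is `(1 + B)^n ≤ (9/4) B^n`.
Since `(1 + B)^n = B^n (1 + 1/B)^n ≤ B^n exp (n/B)`, it suffices that `exp (n/B) ≤ 9/4`,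
which follows from `exp (4/5) < 9/4` as soon as `B ≥ 5n/4`, i.e. `(5n/4)^n ≤ (n!)^2`.
That factorial bound holds for `n ≥ 5` by induction, using `(1 + 1/n)^n ≤ e`;
the cases `n ≤ 4` are checked by hand.
-/

open Nat Real

lemma Real.exp_four_fifths_lt : exp (4 / 5) < 9 / 4 := by
  have h : exp (2 / 5) < 3 / 2 := by
    have := exp_lt_two_add_div_two_sub (x := 2 / 5) (by norm_num) (by norm_num)
    norm_num at this ⊢
    linarith
  calc exp (4 / 5) = exp (2 / 5) ^ 2 := by rw [← exp_nat_mul]; norm_num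
    _ < (3 / 2) ^ 2 := by gcongr
    _ = 9 / 4 := by norm_num

lemma Real.rpow_natCast_div_pow {x : ℝ} (hx : 0 ≤ x) (m : ℕ) {n : ℕ} (hn : n ≠ 0) :
    (x ^ ((m : ℝ) / n)) ^ n = x ^ m := by
  rw [← rpow_natCast, ← rpow_mul hx, div_mul_cancel₀ _ (by exact_mod_cast hn), rpow_natCast]

lemma Real.one_add_pow_le_exp_div_mul_pow {B : ℝ} (hB : 0 < B) (n : ℕ) :
    (1 + B) ^ n ≤ exp (n / B) * B ^ n := by
  calc (1 + B) ^ n = ((1 / B + 1) * B) ^ n := by field_simp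
    _ ≤ (exp (1 / B) * B) ^ n := by gcongr; exact add_one_le_exp _
    _ = exp (n / B) * B ^ n := by rw [mul_pow, ← exp_nat_mul, mul_one_div]

lemma Nat.five_mul_div_four_pow_le_factorial_sq {n : ℕ} (hn : 5 ≤ n) :
    ((5 * n : ℝ) / 4) ^ n ≤ (n ! : ℝ) ^ 2 := by
  induction n, hn using Nat.le_induction with
  | base => norm_num [Nat.factorial]
  | succ n hn ih =>
    have hn5 : (5 : ℝ) ≤ n := by exact_mod_cast hn
    have hratio : 5 * ((n : ℝ) + 1) / 4 * exp 1 ≤ ((n : ℝ) + 1) ^ 2 := by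
      nlinarith [exp_one_lt_d9]
    calc ((5 * (n + 1 : ℕ) : ℝ) / 4) ^ (n + 1)
        = 5 * (n + 1) / 4 * ((1 + (n : ℝ)⁻¹) ^ n * ((5 * n : ℝ) / 4) ^ n) := by
          rw [← mul_pow, pow_succ]
          field_simp
          push_cast
          ring
      _ ≤ 5 * (n + 1) / 4 * (exp 1 * (n ! : ℝ) ^ 2) := by
          gcongr
          exact one_add_inv_pow_le_exp
      _ ≤ ((n : ℝ) + 1) ^ 2 * (n ! : ℝ) ^ 2 := by
          rw [← mul_assoc]; gcongr
      _ = ((n + 1)! : ℝ) ^ 2 := by push_cast [Nat.factorial_succ]; ring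

lemma one_add_pow_le_of_pow_eq_factorial_sq {n : ℕ} (hn : 1 ≤ n) {B : ℝ} (hB : 0 < B)
    (hBn : B ^ n = (n ! : ℝ) ^ 2) : (1 + B) ^ n ≤ (3 / 2 * n !) ^ 2 := by
  rw [mul_pow, ← hBn]
  by_cases h5 : 5 ≤ n
  · have hBlarge : (5 * n : ℝ) / 4 ≤ B :=
      le_of_pow_le_pow_left₀ (by omega) hB.le (hBn ▸ five_mul_div_four_pow_le_factorial_sq h5)
    have hnB : (n : ℝ) / B ≤ 4 / 5 := by
      rw [div_le_div_iff₀ hB (by norm_num)]; linarith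
    calc (1 + B) ^ n ≤ exp (n / B) * B ^ n := one_add_pow_le_exp_div_mul_pow hB n
      _ ≤ exp (4 / 5) * B ^ n := by gcongr
      _ ≤ (3 / 2) ^ 2 * B ^ n := by gcongr; linarith [exp_four_fifths_lt]
  · interval_cases n <;> norm_num [Nat.factorial] at hBn ⊢
    · linarith
    · nlinarith [sq_nonneg (B - 2)]
    · have hub : B ≤ 84 / 25 :=
        le_of_pow_le_pow_left₀ (n := 3) (by norm_num) (by norm_num) (by rw [hBn]; norm_num)
      rw [hBn]
      nlinarith [sq_nonneg (84 / 25 - B)]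
    · have hub : B ≤ 5 :=
        le_of_pow_le_pow_left₀ (n := 4) (by norm_num) (by norm_num) (by rw [hBn]; norm_num)
      rw [hBn]
      nlinarith [sq_nonneg (5 - B), mul_pos hB hB]

/-- for every `n ≥ 1`, `(1 + (n!)^{2/n})^{n/2} ≤ (3/2)·n!`, i.e.
`⟨(n!)^{1/n}⟩^n/n! ≤ 3/2`, with equality at `n = 2`. -/
theorem stmt6 :
    (∀ n : ℕ, 1 ≤ n →
      (1 + ((n.factorial : ℝ)) ^ ((2 : ℝ) / n)) ^ ((n : ℝ) / 2) ≤
        (3 / 2) * (n.factorial : ℝ)) ∧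
    (1 + ((Nat.factorial 2 : ℝ)) ^ ((2 : ℝ) / 2)) ^ ((2 : ℝ) / 2) =
      (3 / 2) * (Nat.factorial 2 : ℝ) := by
  refine ⟨fun n hn => ?_, by norm_num [Nat.factorial]⟩
  set B := (n ! : ℝ) ^ ((2 : ℝ) / n)
  have hB : 0 < B := by positivity
  have hBn : B ^ n = (n ! : ℝ) ^ 2 := by
    simpa using rpow_natCast_div_pow (n !).cast_nonneg 2 (n := n) (by omega)
  have hsq : ((1 + B) ^ ((n : ℝ) / 2)) ^ 2 = (1 + B) ^ n := by
    simpa using rpow_natCast_div_pow (by positivity : (0 : ℝ) ≤ 1 + B) n two_ne_zero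
  exact le_of_pow_le_pow_left₀ two_ne_zero (by positivity)
    (hsq ▸ one_add_pow_le_of_pow_eq_factorial_sq hn hB hBn)
end

section
/- Let N ≥ 2 be an integer, α = exp(2πi/N), and ζ ∈ ℂ with ζ ≠ 0. Define h : ℝ → ℂ by h(x) = (i/N)·∑_{j=0}^{N−1} e^{iα^jζx}/(α^jζ)^{N−1}. Then for all x ≥ 0 one has |h(x)| ≤ (3/2)·⟨x⟩^{N−1}·⟨ζ⟩^{−(N−1)}·e^{|ζ|x}. -/
/-!
Two estimates for `h` are combined. Bounding each of the `N` terms separately gives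
`‖h x‖ ≤ e^{‖ζ‖x} / ‖ζ‖^{N-1}`. Expanding the exponentials in power series, the average over the
`N`-th roots of unity kills the coefficients of `x^k` for `k < N - 1`; since `k! ≥ (k - N + 1)!`
the remaining series is dominated by `x^{N-1} e^{‖ζ‖x}`. Finally `min (x, 1/‖ζ‖) ≤ ⟨x⟩/⟨ζ⟩`:
the first entry is the smaller one when `‖ζ‖x ≤ 1`, the second when `‖ζ‖x ≥ 1`.
-/

open Complex Finset Nat

noncomputable def rootExpSum (N : ℕ) (α ζ : ℂ) (x : ℝ) : ℂ :=
  I / N * ∑ j ∈ range N, exp (I * α ^ j * ζ * x) / (α ^ j * ζ) ^ (N - 1)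

noncomputable def rootExpCoeff (N : ℕ) (α ζ : ℂ) (x : ℝ) (k : ℕ) : ℂ :=
  I / N * ((I * ζ * x) ^ k / (k ! * ζ ^ (N - 1))) * ∑ j ∈ range N, (α ^ (k + 1)) ^ j

theorem IsPrimitiveRoot.geom_sum_pow_eq_zero {K : Type*} [Field K] {α : K} {N k : ℕ}
    (hα : IsPrimitiveRoot α N) (hk0 : k ≠ 0) (hk : k < N) :
    ∑ j ∈ range N, (α ^ k) ^ j = 0 := by
  rw [geom_sum_eq (hα.pow_ne_one_of_pos_of_lt hk0 hk), ← pow_mul, mul_comm, pow_mul,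
    hα.pow_eq_one, one_pow, sub_self, zero_div]

theorem norm_geom_sum_le_of_norm_eq_one {K : Type*} [NormedDivisionRing K] {β : K}
    (hβ : ‖β‖ = 1) (N : ℕ) : ‖∑ j ∈ range N, β ^ j‖ ≤ N :=
  (norm_sum_le _ _).trans (by simp [hβ])

theorem norm_exp_div_pow_le {β ζ : ℂ} (hβ : ‖β‖ = 1) {x : ℝ} (hx : 0 ≤ x) (M : ℕ) :
    ‖exp (I * β * ζ * x) / (β * ζ) ^ M‖ ≤ Real.exp (‖ζ‖ * x) / ‖ζ‖ ^ M := by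
  rw [norm_div, norm_exp, norm_pow, norm_mul, hβ, one_mul]
  gcongr
  calc (I * β * ζ * x).re ≤ ‖I * β * ζ * x‖ := re_le_norm _
    _ = ‖ζ‖ * x := by simp [hβ, abs_of_nonneg hx]

theorem norm_rootExpSum_le_exp_div {N : ℕ} {α : ℂ} (hα : ‖α‖ = 1) (ζ : ℂ) {x : ℝ}
    (hx : 0 ≤ x) : ‖rootExpSum N α ζ x‖ ≤ Real.exp (‖ζ‖ * x) / ‖ζ‖ ^ (N - 1) := by
  rcases N.eq_zero_or_pos with rfl | hN
  · simp only [rootExpSum, CharP.cast_eq_zero, div_zero, zero_mul, norm_zero]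
    positivity
  calc ‖rootExpSum N α ζ x‖
      ≤ 1 / N * ∑ _j ∈ range N, Real.exp (‖ζ‖ * x) / ‖ζ‖ ^ (N - 1) := by
        rw [rootExpSum, norm_mul, norm_div, norm_I, norm_natCast]
        gcongr
        refine (norm_sum_le _ _).trans (sum_le_sum fun j _ => ?_)
        exact norm_exp_div_pow_le (by rw [norm_pow, hα, one_pow]) hx _
    _ = Real.exp (‖ζ‖ * x) / ‖ζ‖ ^ (N - 1) := by
        rw [sum_const, card_range, nsmul_eq_mul]
        field_simp

theorem exp_series_term_div_pow {N : ℕ} (hN : N ≠ 0) {β : ℂ} (hβ : β ^ N = 1) (ζ : ℂ) (x : ℝ)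
    (k : ℕ) :
    (I * β * ζ * x) ^ k / k ! / (β * ζ) ^ (N - 1)
      = (I * ζ * x) ^ k / (k ! * ζ ^ (N - 1)) * β ^ (k + 1) := by
  have hinv : (β ^ (N - 1))⁻¹ = β :=
    inv_eq_of_mul_eq_one_right (by rw [← pow_succ, Nat.sub_add_cancel (by omega), hβ])
  calc (I * β * ζ * x) ^ k / k ! / (β * ζ) ^ (N - 1)
      = (I * ζ * x) ^ k / (k ! * ζ ^ (N - 1)) * β ^ k * (β ^ (N - 1))⁻¹ := by
        rw [mul_pow β ζ, div_eq_mul_inv _ (β ^ (N - 1) * ζ ^ (N - 1)), mul_inv]; ring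
    _ = (I * ζ * x) ^ k / (k ! * ζ ^ (N - 1)) * β ^ (k + 1) := by
        rw [hinv]; ring

theorem hasSum_rootExpCoeff {N : ℕ} (hN : N ≠ 0) {α : ℂ} (hα : α ^ N = 1) (ζ : ℂ) (x : ℝ) :
    HasSum (rootExpCoeff N α ζ x) (rootExpSum N α ζ x) := by
  have hterm := fun j (_ : j ∈ range N) =>
    (NormedSpace.expSeries_div_hasSum_exp (I * α ^ j * ζ * x)).div_const ((α ^ j * ζ) ^ (N - 1))
  have hαj : ∀ j, (α ^ j) ^ N = 1 := fun j => by rw [← pow_mul, mul_comm, pow_mul, hα, one_pow]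
  have hcoeff : rootExpCoeff N α ζ x = fun k => I / N * ∑ j ∈ range N,
      (I * α ^ j * ζ * x) ^ k / k ! / (α ^ j * ζ) ^ (N - 1) := by
    funext k
    rw [rootExpCoeff, mul_assoc, mul_sum]
    congr 1
    refine sum_congr rfl fun j _ => ?_
    rw [exp_series_term_div_pow hN (hαj j), pow_right_comm]
  rw [hcoeff, rootExpSum, exp_eq_exp_ℂ]
  exact (hasSum_sum hterm).mul_left (I / N)

theorem norm_rootExpCoeff_add_le {N : ℕ} (hN : N ≠ 0) {α : ℂ} (hα : ‖α‖ = 1) (ζ : ℂ) {x : ℝ}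
    (hx : 0 ≤ x) (k : ℕ) :
    ‖rootExpCoeff N α ζ x (k + (N - 1))‖ ≤ x ^ (N - 1) * ((‖ζ‖ * x) ^ k / k !) := by
  set M := N - 1
  have hpow : ‖I * ζ * x‖ ^ (k + M) / ‖ζ‖ ^ M ≤ x ^ M * (‖ζ‖ * x) ^ k := by
    refine div_le_of_le_mul₀ (by positivity) (by positivity) (le_of_eq ?_)
    simp only [norm_mul, norm_I, norm_real, Real.norm_eq_abs, abs_of_nonneg hx]
    ring
  have hfact : (k ! : ℝ) ≤ (k + M)! := by exact_mod_cast factorial_le (Nat.le_add_right k M)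
  calc ‖rootExpCoeff N α ζ x (k + M)‖
      = 1 / N * (‖I * ζ * x‖ ^ (k + M) / ‖ζ‖ ^ M / (k + M)!)
          * ‖∑ j ∈ range N, (α ^ (k + M + 1)) ^ j‖ := by
        simp only [rootExpCoeff, norm_mul, norm_div, norm_I, norm_natCast, norm_pow]
        ring
    _ ≤ 1 / N * (‖I * ζ * x‖ ^ (k + M) / ‖ζ‖ ^ M / (k + M)!) * N := by
        gcongr
        refine norm_geom_sum_le_of_norm_eq_one ?_ N
        rw [norm_pow, hα, one_pow]
    _ = ‖I * ζ * x‖ ^ (k + M) / ‖ζ‖ ^ M / (k + M)! := by field_simp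
    _ ≤ x ^ M * (‖ζ‖ * x) ^ k / k ! := div_le_div₀ (by positivity) hpow (by positivity) hfact
    _ = x ^ M * ((‖ζ‖ * x) ^ k / k !) := mul_div_assoc _ _ _

theorem norm_rootExpSum_le_pow_mul_exp {N : ℕ} {α : ℂ} (hα : IsPrimitiveRoot α N) (hN : N ≠ 0)
    (ζ : ℂ) {x : ℝ} (hx : 0 ≤ x) :
    ‖rootExpSum N α ζ x‖ ≤ x ^ (N - 1) * Real.exp (‖ζ‖ * x) := by
  have hvanish : ∑ k ∈ range (N - 1), rootExpCoeff N α ζ x k = 0 :=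
    sum_eq_zero fun k hk => by
      rw [rootExpCoeff, hα.geom_sum_pow_eq_zero k.succ_ne_zero (by simp at hk; omega), mul_zero]
  have htail := (hasSum_nat_add_iff' (N - 1)).mpr (hasSum_rootExpCoeff hN hα.pow_eq_one ζ x)
  rw [hvanish, sub_zero] at htail
  have hmajorant : HasSum (fun k => x ^ (N - 1) * ((‖ζ‖ * x) ^ k / k !))
      (x ^ (N - 1) * Real.exp (‖ζ‖ * x)) := by
    rw [Real.exp_eq_exp_ℝ]
    exact (NormedSpace.expSeries_div_hasSum_exp (‖ζ‖ * x)).mul_left (x ^ (N - 1))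
  exact htail.norm_le_of_bounded hmajorant (norm_rootExpCoeff_add_le hN (hα.norm'_eq_one hN) ζ hx)

theorem le_sqrt_one_add_sq_div {x t : ℝ} (hx : 0 ≤ x) (ht : 0 ≤ t) (htx : t * x ≤ 1) :
    x ≤ √(1 + x ^ 2) / √(1 + t ^ 2) := by
  rw [le_div_iff₀ (by positivity)]
  calc x * √(1 + t ^ 2) = √(x ^ 2 * (1 + t ^ 2)) := by
        rw [Real.sqrt_mul (sq_nonneg x), Real.sqrt_sq hx]
    _ ≤ √(1 + x ^ 2) := Real.sqrt_le_sqrt (by nlinarith [mul_nonneg ht hx])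

theorem inv_le_sqrt_one_add_sq_div {x t : ℝ} (ht : 0 < t) (htx : 1 ≤ t * x) :
    t⁻¹ ≤ √(1 + x ^ 2) / √(1 + t ^ 2) := by
  rw [le_div_iff₀ (by positivity), inv_mul_le_iff₀ ht]
  calc √(1 + t ^ 2) ≤ √(t ^ 2 * (1 + x ^ 2)) := Real.sqrt_le_sqrt (by nlinarith)
    _ = t * √(1 + x ^ 2) := by rw [Real.sqrt_mul (sq_nonneg t), Real.sqrt_sq ht.le]

theorem le_sqrt_ratio_pow_mul_of_le_div_of_le_mul {a E x t : ℝ} {M : ℕ} (hx : 0 ≤ x) (ht : 0 ≤ t)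
    (hE : 0 ≤ E) (h₁ : a ≤ E / t ^ M) (h₂ : a ≤ x ^ M * E) :
    a ≤ √(1 + x ^ 2) ^ M * (√(1 + t ^ 2) ^ M)⁻¹ * E := by
  rw [← div_eq_mul_inv, ← div_pow]
  rcases le_total (t * x) 1 with htx | htx
  · exact h₂.trans (by gcongr; exact le_sqrt_one_add_sq_div hx ht htx)
  · have ht0 : 0 < t := ht.lt_of_ne (by rintro rfl; linarith)
    calc a ≤ E / t ^ M := h₁
      _ = t⁻¹ ^ M * E := by rw [inv_pow, div_eq_inv_mul]
      _ ≤ (√(1 + x ^ 2) / √(1 + t ^ 2)) ^ M * E := by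
          gcongr; exact inv_le_sqrt_one_add_sq_div ht0 htx

theorem stmt7_general (N : ℕ) (hN : 2 ≤ N) (α ζ : ℂ)
    (hα : α = Complex.exp (2 * Real.pi * Complex.I / N))
    (h : ℝ → ℂ)
    (hh : ∀ x : ℝ, h x = (Complex.I / N) * ∑ j ∈ Finset.range N,
      Complex.exp (Complex.I * α ^ j * ζ * x) / (α ^ j * ζ) ^ (N - 1))
    (x : ℝ) (hx : 0 ≤ x) :
    ‖h x‖ ≤
      (3 / 2) * Real.sqrt (1 + x ^ 2) ^ (N - 1)
        * (Real.sqrt (1 + ‖ζ‖ ^ 2) ^ (N - 1))⁻¹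
        * Real.exp (‖ζ‖ * x) := by
  have hN0 : N ≠ 0 := by omega
  have hprim : IsPrimitiveRoot α N := hα ▸ isPrimitiveRoot_exp N hN0
  have hbound : ‖h x‖ ≤ √(1 + x ^ 2) ^ (N - 1) * (√(1 + ‖ζ‖ ^ 2) ^ (N - 1))⁻¹
      * Real.exp (‖ζ‖ * x) := by
    rw [hh x]
    exact le_sqrt_ratio_pow_mul_of_le_div_of_le_mul hx (norm_nonneg ζ) (Real.exp_pos _).le
      (norm_rootExpSum_le_exp_div (hprim.norm'_eq_one hN0) ζ hx)
      (norm_rootExpSum_le_pow_mul_exp hprim hN0 ζ hx)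
  refine hbound.trans ?_
  rw [mul_assoc (3 / 2), mul_assoc (3 / 2)]
  exact le_mul_of_one_le_left (by positivity) (by norm_num)

/-- for `N ≥ 2`, `α = exp(2πi/N)`, `ζ ≠ 0`, and
`h(x) = (i/N)·∑_{j<N} e^{iα^jζx}/(α^jζ)^{N−1}`, one has
`|h(x)| ≤ (3/2)·⟨x⟩^{N−1}·⟨ζ⟩^{−(N−1)}·e^{|ζ|x}` for all `x ≥ 0`. -/
theorem stmt7 (N : ℕ) (hN : 2 ≤ N) (α ζ : ℂ)
    (hα : α = Complex.exp (2 * Real.pi * Complex.I / N)) (hζ : ζ ≠ 0)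
    (h : ℝ → ℂ)
    (hh : ∀ x : ℝ, h x = (Complex.I / N) * ∑ j ∈ Finset.range N,
      Complex.exp (Complex.I * α ^ j * ζ * x) / (α ^ j * ζ) ^ (N - 1))
    (x : ℝ) (hx : 0 ≤ x) :
    ‖h x‖ ≤
      (3 / 2) * Real.sqrt (1 + x ^ 2) ^ (N - 1)
        * (Real.sqrt (1 + ‖ζ‖ ^ 2) ^ (N - 1))⁻¹
        * Real.exp (‖ζ‖ * x) :=
  stmt7_general N hN α ζ hα h hh x hx
end

section
/- Let N ≥ 2 be an integer, α = exp(2πi/N), and ζ ∈ ℂ with ζ ≠ 0. Define h : ℝ → ℂ by h(x) = (i/N)·∑_{j=0}^{N−1} e^{iα^jζx}/(α^jζ)^{N−1}. Then for every integer k with 0 ≤ k ≤ N−1 and every x ≥ 0 one has |h^(k)(x)| ≤ x^{N−k−1}/(N−k−1)! + (3/2)·|ζ|^{k+1}·⟨x⟩^N·⟨ζ⟩^{−N}·e^{|ζ|x}, where h^(k) denotes the k-th derivative of h. -/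
/-!
Up to the factor `(iζ)^(k+1) / (N ζ^N)`, the derivative `h^(k)(x)` is the sum
`S = ∑ⱼ ωⱼ^(k+1) exp (ωⱼ u)` over the `N`-th roots of unity `ωⱼ = αʲ`, with `u = iζx`.
Averaging over the roots of unity kills every Taylor coefficient of `exp (ω u)` except those of
degree `n ≡ d := N - k - 1 (mod N)`, so `S = N u^d / d! + O(|u|^(d+N) e^|u|)`. When `|ζ| x ≤ 1`
this gives the two terms of the bound; when `|ζ| x ≥ 1` the trivial bound `|S| ≤ N e^|u|`
suffices, because then `⟨ζ⟩ ≤ |ζ| ⟨x⟩`.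
-/

open Complex Finset

lemma iteratedDeriv_sum_mul_exp {ι : Type*} (s : Finset ι) (b c : ι → ℂ) (k : ℕ) :
    iteratedDeriv k (fun x : ℝ => ∑ j ∈ s, c j * exp (b j * x)) =
      fun x : ℝ => ∑ j ∈ s, c j * b j ^ k * exp (b j * x) := by
  induction k with
  | zero => simp
  | succ k ih =>
    rw [iteratedDeriv_succ, ih]
    funext x
    refine (HasDerivAt.fun_sum fun j _ => ?_).deriv
    have hb : HasDerivAt (fun x : ℝ => b j * x) (b j) x := by
      simpa using ((hasDerivAt_id x).ofReal_comp).const_mul (b j)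
    exact (hb.cexp.const_mul (c j * b j ^ k)).congr_deriv (by ring)

theorem IsPrimitiveRoot.sum_range_pow_pow {R : Type*} [CommRing R] [IsDomain R] {α : R} {N : ℕ}
    (hα : IsPrimitiveRoot α N) (m : ℕ) :
    ∑ j ∈ range N, (α ^ m) ^ j = if N ∣ m then (N : R) else 0 := by
  split_ifs with hm
  · simp [(hα.pow_eq_one_iff_dvd m).2 hm]
  · have hne : α ^ m - 1 ≠ 0 := sub_ne_zero.2 fun h => hm ((hα.pow_eq_one_iff_dvd m).1 h)
    have hpow : (α ^ m) ^ N = 1 := by rw [← pow_mul, mul_comm, pow_mul, hα.pow_eq_one, one_pow]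
    have hgeom := mul_geom_sum (α ^ m) N
    rw [hpow, sub_self] at hgeom
    exact (mul_eq_zero.1 hgeom).resolve_left hne

theorem IsPrimitiveRoot.sum_pow_mul_sum_pow {R : Type*} [CommRing R] [IsDomain R] {α : R}
    {N : ℕ} (hα : IsPrimitiveRoot α N) (m p : ℕ) (a : ℕ → R) (u : R) :
    ∑ j ∈ range N, (α ^ j) ^ m * ∑ n ∈ range p, a n * (α ^ j * u) ^ n =
      ∑ n ∈ range p, if N ∣ m + n then N * (a n * u ^ n) else 0 := by
  simp_rw [mul_sum]
  rw [sum_comm]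
  refine sum_congr rfl fun n _ => ?_
  have hterm : ∀ j, (α ^ j) ^ m * (a n * (α ^ j * u) ^ n) = (α ^ (m + n)) ^ j * (a n * u ^ n) :=
    fun j => by ring
  simp_rw [hterm, ← sum_mul, hα.sum_range_pow_pow]
  split_ifs <;> simp

noncomputable def rootOfUnityExpSum (α : ℂ) (N m : ℕ) (u : ℂ) : ℂ :=
  ∑ j ∈ range N, (α ^ j) ^ m * exp (α ^ j * u)

lemma norm_rootOfUnityExpSum_le {α : ℂ} (hα : ‖α‖ = 1) (N m : ℕ) (u : ℂ) :
    ‖rootOfUnityExpSum α N m u‖ ≤ N * Real.exp ‖u‖ := by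
  refine (norm_sum_le _ _).trans ((sum_le_card_nsmul _ _ _ fun j _ => ?_).trans_eq
    (by rw [card_range, nsmul_eq_mul]))
  simpa [hα] using norm_exp_le_exp_norm (α ^ j * u)

lemma norm_rootOfUnityExpSum_sub_le {α : ℂ} {N : ℕ} (hα : IsPrimitiveRoot α N) {m d : ℕ}
    (hm : 0 < m) (hmd : m + d = N) (u : ℂ) :
    ‖rootOfUnityExpSum α N m u - N * (u ^ d / d.factorial)‖ ≤
      N * (‖u‖ ^ (d + N) * Real.exp ‖u‖) := by
  have hnorm : ‖α‖ = 1 := hα.norm'_eq_one (by omega)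
  have htaylor : ∑ j ∈ range N, (α ^ j) ^ m *
      ∑ n ∈ range (d + N), (α ^ j * u) ^ n / n.factorial = N * (u ^ d / d.factorial) := by
    simp_rw [div_eq_inv_mul, hα.sum_pow_mul_sum_pow]
    rw [sum_eq_single d]
    · rw [if_pos (by rw [hmd])]
    · rintro n hn hnd
      rw [if_neg]
      -- `0 < m + n < 2N`, so `N ∣ m + n` forces `m + n = N`, i.e. `n = d`.
      rintro ⟨c, hc⟩
      rw [mem_range] at hn
      rcases c with _ | _ | c
      · omega
      · omega
      · nlinarith
    · exact fun hd => absurd (mem_range.2 (by omega)) hd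
  rw [rootOfUnityExpSum, ← htaylor, ← sum_sub_distrib]
  refine (norm_sum_le _ _).trans ((sum_le_card_nsmul _ _ _ fun j _ => ?_).trans_eq
    (by rw [card_range, nsmul_eq_mul]))
  rw [← mul_sub]
  simpa [hnorm] using norm_exp_sub_sum_le_norm_mul_exp (α ^ j * u) (d + N)

lemma iteratedDeriv_eq_rootOfUnityExpSum {N : ℕ} (hN : 0 < N) {α ζ : ℂ} (hαN : α ^ N = 1)
    (hζ : ζ ≠ 0) {h : ℝ → ℂ}
    (hh : ∀ x : ℝ, h x = (I / N) * ∑ j ∈ range N,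
      exp (I * α ^ j * ζ * x) / (α ^ j * ζ) ^ (N - 1)) (k : ℕ) (x : ℝ) :
    iteratedDeriv k h x =
      (I * ζ) ^ (k + 1) / (N * ζ ^ N) * rootOfUnityExpSum α N (k + 1) (I * ζ * x) := by
  have hform : h = fun x : ℝ => ∑ j ∈ range N,
      I / N / (α ^ j * ζ) ^ (N - 1) * exp (I * α ^ j * ζ * x) :=
    funext fun y => by rw [hh, mul_sum]; exact sum_congr rfl fun j _ => by ring
  rw [hform, iteratedDeriv_sum_mul_exp, rootOfUnityExpSum, mul_sum]
  refine sum_congr rfl fun j _ => ?_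
  obtain ⟨n, rfl⟩ : ∃ n, N = n + 1 := ⟨N - 1, by omega⟩
  set w := α ^ j
  have hw : w ^ (n + 1) = 1 := by rw [← pow_mul, mul_comm, pow_mul, hαN, one_pow]
  have hw0 : w ≠ 0 := by rintro h0; simp [h0] at hw
  have hwk : w ^ (k + 1) = w ^ k / w ^ n := by
    rw [eq_div_iff (pow_ne_zero _ hw0), ← pow_add, add_assoc, add_comm 1 n, pow_add, hw, mul_one]
  rw [show w * (I * ζ * x) = I * w * ζ * x by ring, add_tsub_cancel_right, hwk]
  field_simp
  ring

lemma pow_le_sqrt_one_add_sq_pow_mul_inv {a b : ℝ} (ha : 0 ≤ a) (hb : 0 ≤ b) (hab : a * b ≤ 1)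
    (n : ℕ) : a ^ n ≤ √(1 + a ^ 2) ^ n * (√(1 + b ^ 2) ^ n)⁻¹ := by
  have h : a * √(1 + b ^ 2) ≤ √(1 + a ^ 2) := by
    calc a * √(1 + b ^ 2) = √(a ^ 2 * (1 + b ^ 2)) := by
          rw [Real.sqrt_mul (sq_nonneg a), Real.sqrt_sq ha]
      _ ≤ √(1 + a ^ 2) := Real.sqrt_le_sqrt (by nlinarith [mul_nonneg ha hb])
  rw [← div_eq_mul_inv, le_div_iff₀ (by positivity), ← mul_pow]
  exact pow_le_pow_left₀ (by positivity) h n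

lemma inv_pow_le_sqrt_one_add_sq_pow_mul_inv {a b : ℝ} (ha : 0 < a) (hab : 1 ≤ a * b) (n : ℕ) :
    (a ^ n)⁻¹ ≤ √(1 + b ^ 2) ^ n * (√(1 + a ^ 2) ^ n)⁻¹ := by
  have h : √(1 + a ^ 2) ≤ a * √(1 + b ^ 2) := by
    calc √(1 + a ^ 2) ≤ √(a ^ 2 * (1 + b ^ 2)) := Real.sqrt_le_sqrt (by nlinarith)
      _ = a * √(1 + b ^ 2) := by rw [Real.sqrt_mul (sq_nonneg a), Real.sqrt_sq ha.le]
  rw [← div_eq_mul_inv, le_div_iff₀ (by positivity), inv_mul_le_iff₀ (by positivity), ← mul_pow]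
  exact pow_le_pow_left₀ (by positivity) h n

lemma norm_cpow_div_mul_rootOfUnityExpSum_le_of_one_le {α : ℂ} (hα : ‖α‖ = 1) {N m : ℕ}
    {ζ : ℂ} (hζ : ζ ≠ 0) {x : ℝ} (hx : 0 ≤ x) (hzx : 1 ≤ ‖ζ‖ * x) :
    ‖(I * ζ) ^ m / (N * ζ ^ N) * rootOfUnityExpSum α N m (I * ζ * x)‖ ≤
      ‖ζ‖ ^ m * √(1 + x ^ 2) ^ N * (√(1 + ‖ζ‖ ^ 2) ^ N)⁻¹ * Real.exp (‖ζ‖ * x) := by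
  have hz : 0 < ‖ζ‖ := norm_pos_iff.2 hζ
  have hu : ‖I * ζ * x‖ = ‖ζ‖ * x := by simp [abs_of_nonneg hx]
  calc _ ≤ ‖ζ‖ ^ m / (N * ‖ζ‖ ^ N) * (N * Real.exp (‖ζ‖ * x)) := by
        rw [norm_mul, ← hu]
        gcongr
        · simp
        · exact norm_rootOfUnityExpSum_le hα N m _
    _ ≤ ‖ζ‖ ^ m * (‖ζ‖ ^ N)⁻¹ * Real.exp (‖ζ‖ * x) := by
        rcases N.eq_zero_or_pos with rfl | hN
        · simp only [CharP.cast_eq_zero, zero_mul, mul_zero]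
          positivity
        · exact le_of_eq (by field_simp)
    _ ≤ ‖ζ‖ ^ m * (√(1 + x ^ 2) ^ N * (√(1 + ‖ζ‖ ^ 2) ^ N)⁻¹) * Real.exp (‖ζ‖ * x) := by
        gcongr
        exact inv_pow_le_sqrt_one_add_sq_pow_mul_inv hz hzx N
    _ = _ := by ring

lemma norm_cpow_div_mul_rootOfUnityExpSum_le_of_le_one {α : ℂ} {N : ℕ}
    (hα : IsPrimitiveRoot α N) {m d : ℕ} (hm : 0 < m) (hmd : m + d = N)
    {ζ : ℂ} (hζ : ζ ≠ 0) {x : ℝ} (hx : 0 ≤ x) (hzx : ‖ζ‖ * x ≤ 1) :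
    ‖(I * ζ) ^ m / (N * ζ ^ N) * rootOfUnityExpSum α N m (I * ζ * x)‖ ≤
      x ^ d / d.factorial +
        ‖ζ‖ ^ m * √(1 + x ^ 2) ^ N * (√(1 + ‖ζ‖ ^ 2) ^ N)⁻¹ * Real.exp (‖ζ‖ * x) := by
  set z := ‖ζ‖
  set S := rootOfUnityExpSum α N m (I * ζ * x)
  set P : ℂ := N * ((I * ζ * x) ^ d / d.factorial)
  have hz : 0 < z := norm_pos_iff.2 hζ
  have hu : ‖I * ζ * x‖ = z * x := by simp [z, abs_of_nonneg hx]
  have hP : ‖P‖ = N * ((z * x) ^ d / d.factorial) := by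
    simp only [P, norm_mul, norm_div, norm_pow, norm_natCast, hu]
  have hN : (N : ℝ) ≠ 0 := by norm_cast; omega
  calc _ ≤ z ^ m / (N * z ^ N) * (‖P‖ + ‖S - P‖) := by
        rw [norm_mul]
        gcongr
        · simp [z]
        · exact norm_le_insert' S P
    _ ≤ z ^ m / (N * z ^ N) * (N * ((z * x) ^ d / d.factorial) +
          N * ((z * x) ^ (d + N) * Real.exp (z * x))) := by
        rw [hP, ← hu]
        gcongr
        exact norm_rootOfUnityExpSum_sub_le hα hm hmd _
    _ = x ^ d / d.factorial + z ^ m * (z * x) ^ d * x ^ N * Real.exp (z * x) := by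
        rw [← hmd]
        field_simp
        ring
    _ ≤ x ^ d / d.factorial + z ^ m * 1 * (√(1 + x ^ 2) ^ N * (√(1 + z ^ 2) ^ N)⁻¹) *
          Real.exp (z * x) := by
        gcongr
        · exact pow_le_one₀ (by positivity) hzx
        · exact pow_le_sqrt_one_add_sq_pow_mul_inv hx hz.le (by linarith [mul_comm z x]) N
    _ = _ := by ring

/-- with `h` as in Statement 7, for every `0 ≤ k ≤ N−1` and `x ≥ 0`,
`|h^{(k)}(x)| ≤ x^{N−k−1}/(N−k−1)! + (3/2)·|ζ|^{k+1}·⟨x⟩^N·⟨ζ⟩^{−N}·e^{|ζ|x}`. -/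
theorem stmt8 (N : ℕ) (hN : 2 ≤ N) (α ζ : ℂ)
    (hα : α = Complex.exp (2 * Real.pi * Complex.I / N)) (hζ : ζ ≠ 0)
    (h : ℝ → ℂ)
    (hh : ∀ x : ℝ, h x = (Complex.I / N) * ∑ j ∈ Finset.range N,
      Complex.exp (Complex.I * α ^ j * ζ * x) / (α ^ j * ζ) ^ (N - 1))
    (k : ℕ) (hk : k ≤ N - 1) (x : ℝ) (hx : 0 ≤ x) :
    ‖iteratedDeriv k h x‖ ≤
      x ^ (N - k - 1) / (N - k - 1).factorial
        + (3 / 2) * ‖ζ‖ ^ (k + 1) * Real.sqrt (1 + x ^ 2) ^ N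
          * (Real.sqrt (1 + ‖ζ‖ ^ 2) ^ N)⁻¹
          * Real.exp (‖ζ‖ * x) := by
  have hprim : IsPrimitiveRoot α N := hα ▸ isPrimitiveRoot_exp N (by omega)
  rw [iteratedDeriv_eq_rootOfUnityExpSum (by omega) hprim.pow_eq_one hζ hh]
  set T := ‖ζ‖ ^ (k + 1) * √(1 + x ^ 2) ^ N * (√(1 + ‖ζ‖ ^ 2) ^ N)⁻¹ * Real.exp (‖ζ‖ * x)
  have hT : 0 ≤ T := by positivity
  have hfirst : 0 ≤ x ^ (N - k - 1) / ((N - k - 1).factorial : ℝ) := by positivity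
  rcases le_total 1 (‖ζ‖ * x) with hzx | hzx
  · have := norm_cpow_div_mul_rootOfUnityExpSum_le_of_one_le (hprim.norm'_eq_one (by omega))
      (N := N) (m := k + 1) hζ hx hzx
    linarith
  · have := norm_cpow_div_mul_rootOfUnityExpSum_le_of_le_one hprim (by omega : 0 < k + 1)
      (show k + 1 + (N - k - 1) = N by omega) hζ hx hzx
    linarith
end

section
/- Let V : ℝ → ℂ be a function, z ∈ ℂ, and let θ₁, θ₂ : ℝ → ℂ be three times differentiable functions satisfying i·θ_j'''(x) + (V(x) − z)·θ_j(x) = 0 for all x ∈ ℝ and j = 1, 2. Define u(x) = θ₁(x)·θ₂'(x) − θ₂(x)·θ₁'(x). Then u is three times differentiable and satisfies −i·u'''(x) + (V(x) − z)·u(x) = 0 for all x ∈ ℝ. -/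
/-!
For solutions of `θ''' = q θ`, the Wronskian `u = θ₁θ₂' − θ₂θ₁'` satisfies the adjoint equation
`u''' = −q u`: each differentiation of `u` cancels the symmetric cross terms, the term
`θ₁θ₂''' − θ₂θ₁''' = q (θ₁θ₂ − θ₂θ₁)` vanishes, and finally
`u''' = θ₁'θ₂''' − θ₂'θ₁''' = −q u`. Since `i·θ''' + (V − z)θ = 0` means `θ''' = i(V − z)θ`,
this gives `−i·u''' + (V − z)u = (i² + 1)(V − z)u = 0`.
-/

variable {𝕜 : Type*} [NontriviallyNormedField 𝕜] {A : Type*} [NormedCommRing A]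
  [NormedAlgebra 𝕜 A]

theorem HasDerivAt.wronskian {f g f' g' : 𝕜 → A} {f'' g'' : A} {x : 𝕜}
    (hf : HasDerivAt f (f' x) x) (hg : HasDerivAt g (g' x) x)
    (hf' : HasDerivAt f' f'' x) (hg' : HasDerivAt g' g'' x) :
    HasDerivAt (fun y => f y * g' y - g y * f' y) (f x * g'' - g x * f'') x :=
  ((hf.mul hg').sub (hg.mul hf')).congr_deriv (by ring)

theorem wronskian_hasDerivAt_of_third_deriv_eq_mul (q : 𝕜 → A)
    {θ₁ d₁ dd₁ θ₂ d₂ dd₂ : 𝕜 → A}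
    (hθ₁ : ∀ x, HasDerivAt θ₁ (d₁ x) x) (hd₁ : ∀ x, HasDerivAt d₁ (dd₁ x) x)
    (hdd₁ : ∀ x, HasDerivAt dd₁ (q x * θ₁ x) x)
    (hθ₂ : ∀ x, HasDerivAt θ₂ (d₂ x) x) (hd₂ : ∀ x, HasDerivAt d₂ (dd₂ x) x)
    (hdd₂ : ∀ x, HasDerivAt dd₂ (q x * θ₂ x) x) :
    (∀ x, HasDerivAt (fun y => θ₁ y * d₂ y - θ₂ y * d₁ y) (θ₁ x * dd₂ x - θ₂ x * dd₁ x) x) ∧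
    (∀ x, HasDerivAt (fun y => θ₁ y * dd₂ y - θ₂ y * dd₁ y)
      (d₁ x * dd₂ x - d₂ x * dd₁ x) x) ∧
    (∀ x, HasDerivAt (fun y => d₁ y * dd₂ y - d₂ y * dd₁ y)
      (-q x * (θ₁ x * d₂ x - θ₂ x * d₁ x)) x) :=
  ⟨fun x => (hθ₁ x).wronskian (hθ₂ x) (hd₁ x) (hd₂ x),
    fun x => ((hθ₁ x).mul (hdd₂ x)).sub ((hθ₂ x).mul (hdd₁ x)) |>.congr_deriv (by ring),
    fun x => (hd₁ x).wronskian (hd₂ x) (hdd₁ x) (hdd₂ x) |>.congr_deriv (by ring)⟩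

/-- if `θ₁, θ₂` are three times differentiable with
`i·θ_j''' + (V−z)·θ_j = 0`, then `u = θ₁θ₂' − θ₂θ₁'` is three times differentiable and
satisfies `−i·u''' + (V−z)·u = 0`. -/
theorem stmt11 (V : ℝ → ℂ) (z : ℂ)
    (θ₁ d₁ dd₁ ddd₁ θ₂ d₂ dd₂ ddd₂ : ℝ → ℂ)
    (hθ₁ : ∀ x : ℝ, HasDerivAt θ₁ (d₁ x) x)
    (hd₁ : ∀ x : ℝ, HasDerivAt d₁ (dd₁ x) x)
    (hdd₁ : ∀ x : ℝ, HasDerivAt dd₁ (ddd₁ x) x)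
    (hθ₂ : ∀ x : ℝ, HasDerivAt θ₂ (d₂ x) x)
    (hd₂ : ∀ x : ℝ, HasDerivAt d₂ (dd₂ x) x)
    (hdd₂ : ∀ x : ℝ, HasDerivAt dd₂ (ddd₂ x) x)
    (heq₁ : ∀ x : ℝ, Complex.I * ddd₁ x + (V x - z) * θ₁ x = 0)
    (heq₂ : ∀ x : ℝ, Complex.I * ddd₂ x + (V x - z) * θ₂ x = 0)
    (u : ℝ → ℂ) (hu : ∀ x : ℝ, u x = θ₁ x * d₂ x - θ₂ x * d₁ x) :
    ∃ u₁ u₂ u₃ : ℝ → ℂ,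
      (∀ x : ℝ, HasDerivAt u (u₁ x) x) ∧
      (∀ x : ℝ, HasDerivAt u₁ (u₂ x) x) ∧
      (∀ x : ℝ, HasDerivAt u₂ (u₃ x) x) ∧
      (∀ x : ℝ, -Complex.I * u₃ x + (V x - z) * u x = 0) := by
  obtain rfl : u = fun x => θ₁ x * d₂ x - θ₂ x * d₁ x := funext hu
  have third_deriv_eq {θ ddd : ℝ → ℂ} (h : ∀ x, Complex.I * ddd x + (V x - z) * θ x = 0)
      (x : ℝ) : ddd x = Complex.I * (V x - z) * θ x := by
    linear_combination -Complex.I * h x + ddd x * Complex.I_sq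
  obtain ⟨hu₁, hu₂, hu₃⟩ := wronskian_hasDerivAt_of_third_deriv_eq_mul
    (fun x => Complex.I * (V x - z)) hθ₁ hd₁ (fun x => third_deriv_eq heq₁ x ▸ hdd₁ x)
    hθ₂ hd₂ (fun x => third_deriv_eq heq₂ x ▸ hdd₂ x)
  refine ⟨_, _, _, hu₁, hu₂, hu₃, fun x => ?_⟩
  linear_combination (V x - z) * (θ₁ x * d₂ x - θ₂ x * d₁ x) * Complex.I_sq
end

section
/- Let α = exp(2πi/3), fix x₀ ∈ ℝ and a, b, c ∈ ℂ, and set p(t) = a + bt + ct². Let v₀, v₁, v₂ : ℂ → ℂ be functions such that, as ζ → 0, v₀(ζ) − p(x₀) = O(ζ), v₁(ζ) − (b + 2cx₀) = O(ζ), and v₂(ζ) − 2c = O(ζ). Define Δ(ζ) = det [[e^{iζx₀}, e^{iαζx₀}, v₀(ζ)], [iζe^{iζx₀}, iαζe^{iαζx₀}, v₁(ζ)], [(iζ)²e^{iζx₀}, (iαζ)²e^{iαζx₀}, v₂(ζ)]]. Then Δ(ζ) − 2c·i·(α−1)·ζ·e^{i(1+α)ζx₀} = O(ζ²) as ζ →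 0; in particular Δ(ζ)/ζ → 2c·i·(α−1) as ζ → 0, so Δ vanishes to exactly first order at ζ = 0 if and only if c ≠ 0. -/
open Asymptotics Filter Complex Topology

/-!
Factoring `e^{iζx₀}` and `e^{iαζx₀}` out of the first two columns leaves a Vandermonde-type
determinant in `λ = iζ`, `μ = iαζ`, which expands to
`λμ(μ − λ) v₀ − (μ² − λ²) v₁ + (μ − λ) v₂`. Only the last term is of order `ζ`, and since
`v₂ = 2c + O(ζ)` it equals `2c(μ − λ) + O(ζ²)`; the other two are `O(ζ²)` because `v₀`, `v₁` stay
bounded near `0`.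
-/

theorem Matrix.det_fin_three_of_geometric_columns {R : Type*} [CommRing R]
    (E F l m v₀ v₁ v₂ : R) :
    !![E, F, v₀; l * E, m * F, v₁; l ^ 2 * E, m ^ 2 * F, v₂].det =
      E * F * (l * m * (m - l) * v₀ - (m ^ 2 - l ^ 2) * v₁ + (m - l) * v₂) := by
  simp only [Matrix.det_fin_three, Matrix.of_apply, Matrix.cons_val', Matrix.cons_val_zero,
    Matrix.cons_val_one, Matrix.cons_val_two, Matrix.empty_val', Matrix.cons_val_fin_one,
    Matrix.head_cons, Matrix.tail_cons, Matrix.head_fin_const]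
  ring

section Asymptotics

variable {𝕜 E : Type*} [NormedField 𝕜] [NormedAddCommGroup E]

theorem tendsto_nhds_of_sub_isBigO_id {f : 𝕜 → E} {L : E}
    (h : (fun ζ => f ζ - L) =O[𝓝 0] fun ζ => ζ) : Tendsto f (𝓝 0) (𝓝 L) :=
  tendsto_sub_nhds_zero_iff.mp (h.trans_tendsto tendsto_id)

theorem isBigO_sq_of_cubic_quadratic_linear {f g h : 𝕜 → 𝕜} (A B C : 𝕜)
    (hf : f =O[𝓝 0] fun _ => (1 : 𝕜)) (hg : g =O[𝓝 0] fun _ => (1 : 𝕜))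
    (hh : h =O[𝓝 0] fun ζ => ζ) :
    (fun ζ => A * ζ ^ 3 * f ζ + B * ζ ^ 2 * g ζ + C * ζ * h ζ) =O[𝓝 0] fun ζ => ζ ^ 2 := by
  have hζ : (fun ζ : 𝕜 => ζ) =O[𝓝 0] fun _ => (1 : 𝕜) := tendsto_id.isBigO_one 𝕜
  have h₃ : (fun ζ => A * ζ ^ 3 * f ζ) =O[𝓝 0] fun ζ => ζ ^ 2 :=
    (((isBigO_refl (fun ζ : 𝕜 => ζ ^ 2) _).mul (hζ.mul hf)).const_mul_left A).congr
      (fun _ => by ring) (fun _ => by ring)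
  have h₂ : (fun ζ => B * ζ ^ 2 * g ζ) =O[𝓝 0] fun ζ => ζ ^ 2 :=
    (((isBigO_refl (fun ζ : 𝕜 => ζ ^ 2) _).mul hg).const_mul_left B).congr
      (fun _ => by ring) (fun _ => by ring)
  have h₁ : (fun ζ => C * ζ * h ζ) =O[𝓝 0] fun ζ => ζ ^ 2 :=
    (((isBigO_refl (fun ζ : 𝕜 => ζ) _).mul hh).const_mul_left C).congr
      (fun _ => by ring) (fun _ => by ring)
  exact (h₃.add h₂).add h₁

theorem tendsto_div_of_sub_isBigO_sq {f G : 𝕜 → 𝕜} {K : 𝕜}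
    (h : (fun ζ => f ζ - K * ζ * G ζ) =O[𝓝 0] fun ζ => ζ ^ 2) (hG : Tendsto G (𝓝 0) (𝓝 1)) :
    Tendsto (fun ζ => f ζ / ζ) (𝓝[≠] 0) (𝓝 K) := by
  have hrem : Tendsto (fun ζ => (f ζ - K * ζ * G ζ) / ζ) (𝓝[≠] 0) (𝓝 0) :=
    ((h.trans_isLittleO (isLittleO_pow_id one_lt_two)).tendsto_div_nhds_zero).mono_left
      nhdsWithin_le_nhds
  have hmain : Tendsto (fun ζ => K * G ζ) (𝓝[≠] 0) (𝓝 K) := by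
    simpa using (hG.const_mul K).mono_left nhdsWithin_le_nhds
  refine (by simpa using hrem.add hmain : Tendsto _ _ (𝓝 K)).congr' ?_
  filter_upwards [self_mem_nhdsWithin] with ζ (hζ : ζ ≠ 0)
  field_simp
  ring

end Asymptotics

theorem stmt13_general (α : ℂ)
    (x₀ : ℝ) (a b c : ℂ) (v₀ v₁ v₂ : ℂ → ℂ)
    (hv₀ : (fun ζ : ℂ => v₀ ζ - (a + b * x₀ + c * (x₀ : ℂ) ^ 2)) =O[nhds 0] (fun ζ : ℂ => ζ))
    (hv₁ : (fun ζ : ℂ => v₁ ζ - (b + 2 * c * x₀)) =O[nhds 0] (fun ζ : ℂ => ζ))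
    (hv₂ : (fun ζ : ℂ => v₂ ζ - 2 * c) =O[nhds 0] (fun ζ : ℂ => ζ))
    (Δ : ℂ → ℂ)
    (hΔ : ∀ ζ : ℂ, Δ ζ = Matrix.det
      !![Complex.exp (Complex.I * ζ * x₀), Complex.exp (Complex.I * α * ζ * x₀), v₀ ζ;
         Complex.I * ζ * Complex.exp (Complex.I * ζ * x₀),
           Complex.I * α * ζ * Complex.exp (Complex.I * α * ζ * x₀), v₁ ζ;
         (Complex.I * ζ) ^ 2 * Complex.exp (Complex.I * ζ * x₀),
           (Complex.I * α * ζ) ^ 2 * Complex.exp (Complex.I * α * ζ * x₀), v₂ ζ]) :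
    ((fun ζ : ℂ => Δ ζ - 2 * c * Complex.I * (α - 1) * ζ
        * Complex.exp (Complex.I * (1 + α) * ζ * x₀)) =O[nhds 0] (fun ζ : ℂ => ζ ^ 2)) ∧
    Tendsto (fun ζ : ℂ => Δ ζ / ζ) (nhdsWithin 0 {0}ᶜ)
      (nhds (2 * c * Complex.I * (α - 1))) := by
  have hG : Continuous fun ζ : ℂ => exp (I * (1 + α) * ζ * x₀) := by fun_prop
  have hexpand : ∀ ζ, Δ ζ - 2 * c * I * (α - 1) * ζ * exp (I * (1 + α) * ζ * x₀) =
      exp (I * (1 + α) * ζ * x₀) * (-(I * α * (α - 1)) * ζ ^ 3 * v₀ ζ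
        + (α ^ 2 - 1) * ζ ^ 2 * v₁ ζ + I * (α - 1) * ζ * (v₂ ζ - 2 * c)) := by
    intro ζ
    rw [hΔ, Matrix.det_fin_three_of_geometric_columns, ← exp_add,
      show I * ζ * x₀ + I * α * ζ * x₀ = I * (1 + α) * ζ * x₀ by ring]
    linear_combination exp (I * (1 + α) * ζ * x₀) *
      (I * ζ ^ 3 * (α ^ 2 - α) * v₀ ζ + ζ ^ 2 * (1 - α ^ 2) * v₁ ζ) * I_sq
  have hO := ((hG.tendsto 0).isBigO_one ℂ).mul <| isBigO_sq_of_cubic_quadratic_linear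
    (-(I * α * (α - 1))) (α ^ 2 - 1) (I * (α - 1))
    ((tendsto_nhds_of_sub_isBigO_id hv₀).isBigO_one ℂ)
    ((tendsto_nhds_of_sub_isBigO_id hv₁).isBigO_one ℂ) hv₂
  simp only [← hexpand, one_mul] at hO
  exact ⟨hO, tendsto_div_of_sub_isBigO_sq (G := fun ζ => exp (I * (1 + α) * ζ * x₀)) hO
    (by simpa using hG.tendsto 0)⟩

/-- with `α = exp(2πi/3)`, `p(t) = a + bt + ct²`, and `v₀, v₁, v₂`
approximating `p(x₀)`, `p'(x₀)`, `p''(x₀)` to order `O(ζ)`, the determinant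
`Δ(ζ) = det [[e^{iζx₀}, e^{iαζx₀}, v₀(ζ)], [iζe^{iζx₀}, iαζe^{iαζx₀}, v₁(ζ)],
[(iζ)²e^{iζx₀}, (iαζ)²e^{iαζx₀}, v₂(ζ)]]` satisfies
`Δ(ζ) − 2c·i·(α−1)·ζ·e^{i(1+α)ζx₀} = O(ζ²)` as `ζ → 0`; in particular
`Δ(ζ)/ζ → 2c·i·(α−1)` as `ζ → 0`. -/
theorem stmt13 (α : ℂ) (hα : α = Complex.exp (2 * Real.pi * Complex.I / 3))
    (x₀ : ℝ) (a b c : ℂ) (v₀ v₁ v₂ : ℂ → ℂ)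
    (hv₀ : (fun ζ : ℂ => v₀ ζ - (a + b * x₀ + c * (x₀ : ℂ) ^ 2)) =O[nhds 0] (fun ζ : ℂ => ζ))
    (hv₁ : (fun ζ : ℂ => v₁ ζ - (b + 2 * c * x₀)) =O[nhds 0] (fun ζ : ℂ => ζ))
    (hv₂ : (fun ζ : ℂ => v₂ ζ - 2 * c) =O[nhds 0] (fun ζ : ℂ => ζ))
    (Δ : ℂ → ℂ)
    (hΔ : ∀ ζ : ℂ, Δ ζ = Matrix.det
      !![Complex.exp (Complex.I * ζ * x₀), Complex.exp (Complex.I * α * ζ * x₀), v₀ ζ;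
         Complex.I * ζ * Complex.exp (Complex.I * ζ * x₀),
           Complex.I * α * ζ * Complex.exp (Complex.I * α * ζ * x₀), v₁ ζ;
         (Complex.I * ζ) ^ 2 * Complex.exp (Complex.I * ζ * x₀),
           (Complex.I * α * ζ) ^ 2 * Complex.exp (Complex.I * α * ζ * x₀), v₂ ζ]) :
    ((fun ζ : ℂ => Δ ζ - 2 * c * Complex.I * (α - 1) * ζ
        * Complex.exp (Complex.I * (1 + α) * ζ * x₀)) =O[nhds 0] (fun ζ : ℂ => ζ ^ 2)) ∧
    Tendsto (fun ζ : ℂ => Δ ζ / ζ) (nhdsWithin 0 {0}ᶜ)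
      (nhds (2 * c * Complex.I * (α - 1))) :=
  stmt13_general α x₀ a b c v₀ v₁ v₂ hv₀ hv₁ hv₂ Δ hΔ
end

section
/- Let α = exp(2πi/3) and let ζ ∈ ℂ with ζ ≠ 0 and 0 ≤ arg ζ ≤ π/3. Define R(x,y;ζ) = (i/3)·(e^{iζ(x−y)}/ζ² + e^{iαζ(x−y)}/(αζ)²) for x ≥ y, and R(x,y;ζ) = −(i/3)·e^{iα²ζ(x−y)}/(α²ζ)² for x < y. Then for all x, y ∈ ℝ one has |R(x,y;ζ) − (α/3)·(−iα/ζ² + (x−y)/ζ)| ≤ (2/3)·|x−y|². -/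
open Complex

/-!
Subtracting the given first-order expansion from `R` leaves, branch by branch, a sum of Taylor
remainders `(e^{iwt} - 1 - iwt)/(3w²)` with `w ∈ {ζ, αζ}` for `t = x - y ≥ 0` and `w = α²ζ`
for `t < 0`; the constant and linear terms cancel because `1 + α + α² = 0`. The sector condition
on `arg ζ` makes `Im w` have the sign of `t` in each case, so `iwt` lies in the closed left
half-plane, where `|e^z - 1 - z| ≤ |z|²` by the mean value inequality (`|e^z| ≤ 1` there).
Each remainder is therefore at most `t²/3`.
-/

/-- The integral kernel of the resolvent of `(−i d/dx)³` at `z = ζ³`: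
`R(x,y;ζ) = (i/3)(e^{iζ(x−y)}/ζ² + e^{iαζ(x−y)}/(αζ)²)` for `x ≥ y` and
`R(x,y;ζ) = −(i/3)e^{iα²ζ(x−y)}/(α²ζ)²` for `x < y`. -/
noncomputable def Rker (α ζ : ℂ) (x y : ℝ) : ℂ :=
  if y ≤ x then
    (Complex.I / 3) * (Complex.exp (Complex.I * ζ * (x - y)) / ζ ^ 2
      + Complex.exp (Complex.I * α * ζ * (x - y)) / (α * ζ) ^ 2)
  else
    -(Complex.I / 3) * Complex.exp (Complex.I * α ^ 2 * ζ * (x - y)) / (α ^ 2 * ζ) ^ 2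

section Exponential

theorem norm_exp_sub_one_le_of_re_nonpos {z : ℂ} (hz : z.re ≤ 0) : ‖exp z - 1‖ ≤ ‖z‖ := by
  have h := (convex_halfSpace_re_le (0 : ℝ)).norm_image_sub_le_of_norm_hasDerivWithin_le
    (f := exp) (C := 1) (fun u _ => (hasDerivAt_exp u).hasDerivWithinAt)
    (fun u hu => by rw [norm_exp]; exact Real.exp_le_one_iff.mpr hu)
    (by simp : (0 : ℂ) ∈ {w : ℂ | w.re ≤ 0}) hz
  simpa using h

theorem norm_exp_sub_one_sub_id_le_of_re_nonpos {z : ℂ} (hz : z.re ≤ 0) :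
    ‖exp z - 1 - z‖ ≤ ‖z‖ ^ 2 := by
  have hS : Convex ℝ ({w : ℂ | w.re ≤ 0} ∩ Metric.closedBall 0 ‖z‖) :=
    (convex_halfSpace_re_le 0).inter (convex_closedBall _ _)
  have h := hS.norm_image_sub_le_of_norm_hasDerivWithin_le
    (f := fun u => exp u - 1 - u) (C := ‖z‖)
    (fun u _ => (((hasDerivAt_exp u).sub_const 1).sub (hasDerivAt_id u)).hasDerivWithinAt)
    (fun u hu => (norm_exp_sub_one_le_of_re_nonpos hu.1).trans (mem_closedBall_zero_iff.mp hu.2))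
    (by simp : (0 : ℂ) ∈ {w : ℂ | w.re ≤ 0} ∩ Metric.closedBall 0 ‖z‖) ⟨hz, by simp⟩
  simpa [sq] using h

theorem norm_exp_I_mul_sub_one_sub_div_sq_le (w : ℂ) (t : ℝ) (h : 0 ≤ w.im * t) :
    ‖(exp (I * w * t) - 1 - I * w * t) / w ^ 2‖ ≤ t ^ 2 := by
  have hre : (I * w * t).re ≤ 0 := by simpa [mul_re] using h
  have hnorm : ‖I * w * t‖ = ‖w‖ * |t| := by simp
  rw [norm_div, norm_pow]
  refine div_le_of_le_mul₀ (by positivity) (by positivity) ?_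
  calc ‖exp (I * w * t) - 1 - I * w * t‖ ≤ (‖w‖ * |t|) ^ 2 := by
        rw [← hnorm]; exact norm_exp_sub_one_sub_id_le_of_re_nonpos hre
    _ = t ^ 2 * ‖w‖ ^ 2 := by rw [mul_pow, sq_abs, mul_comm]

theorem im_exp_mul_I_mul (φ : ℝ) (ζ : ℂ) :
    (exp (φ * I) * ζ).im = ‖ζ‖ * Real.sin (φ + arg ζ) := by
  conv_lhs => rw [← norm_mul_exp_arg_mul_I ζ, mul_left_comm, ← exp_add, ← add_mul]
  rw [← ofReal_add, im_ofReal_mul, exp_ofReal_mul_I_im]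

end Exponential

section CubeRoot

variable {K : Type*} [Field K] {α : K}

theorem pow_three_eq_one_of_sq_add_self_add_one_eq_zero (hα : α ^ 2 + α + 1 = 0) :
    α ^ 3 = 1 := by
  linear_combination (α - 1) * hα

theorem inv_eq_sq_of_sq_add_self_add_one_eq_zero (hα : α ^ 2 + α + 1 = 0) : α⁻¹ = α ^ 2 :=
  inv_eq_of_mul_eq_one_right <| by
    linear_combination pow_three_eq_one_of_sq_add_self_add_one_eq_zero hα

theorem mul_inv_sq_self (a : K) : a * a⁻¹ ^ 2 = a⁻¹ := by
  simpa only [sq, inv_inv, mul_assoc] using inv_mul_mul_self a⁻¹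

end CubeRoot

section PrimitiveCubeRoot

theorem exp_two_pi_I_div_three_sq_add_self_add_one :
    exp (2 * Real.pi * I / 3) ^ 2 + exp (2 * Real.pi * I / 3) + 1 = 0 := by
  simpa [Finset.sum_range_succ, add_comm, add_left_comm, add_assoc] using
    (isPrimitiveRoot_exp 3 (by norm_num)).geom_sum_eq_zero (by norm_num)

variable {ζ : ℂ} (harg₀ : 0 ≤ ζ.arg) (harg₁ : ζ.arg ≤ Real.pi / 3)
include harg₀ harg₁

theorem im_exp_two_pi_I_div_three_mul_nonneg : 0 ≤ (exp (2 * Real.pi * I / 3) * ζ).im := by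
  rw [show 2 * Real.pi * I / 3 = (2 * Real.pi / 3 : ℝ) * I by push_cast; ring, im_exp_mul_I_mul]
  exact mul_nonneg (norm_nonneg _)
    (Real.sin_nonneg_of_nonneg_of_le_pi (by linarith [Real.pi_pos]) (by linarith))

theorem im_exp_two_pi_I_div_three_sq_mul_nonpos : (exp (2 * Real.pi * I / 3) ^ 2 * ζ).im ≤ 0 := by
  rw [← exp_nat_mul, show (2 : ℕ) * (2 * Real.pi * I / 3) = (4 * Real.pi / 3 : ℝ) * I by
      push_cast; ring, im_exp_mul_I_mul,
    show 4 * Real.pi / 3 + ζ.arg = (Real.pi / 3 + ζ.arg) + Real.pi by ring,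
    Real.sin_add_pi, mul_neg, neg_nonpos]
  exact mul_nonneg (norm_nonneg _)
    (Real.sin_nonneg_of_nonneg_of_le_pi (by linarith [Real.pi_pos]) (by linarith))

end PrimitiveCubeRoot

section Kernel

variable {α : ℂ} (hα : α ^ 2 + α + 1 = 0) (ζ : ℂ) {x y : ℝ}
include hα

-- Both identities are polynomial in `α`, `ζ`, `ζ⁻¹`, `I` modulo `α² + α + 1 = 0`, `I² = -1`
-- and `ζ ζ⁻² = ζ⁻¹`.
theorem Rker_sub_eq_of_le (h : y ≤ x) :
    Rker α ζ x y - (α / 3) * (-I * α / ζ ^ 2 + ((x : ℂ) - y) / ζ) =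
      I / 3 * ((exp (I * ζ * (x - y : ℝ)) - 1 - I * ζ * (x - y : ℝ)) / ζ ^ 2
        + (exp (I * (α * ζ) * (x - y : ℝ)) - 1 - I * (α * ζ) * (x - y : ℝ)) / (α * ζ) ^ 2) := by
  rw [Rker, if_pos h]
  simp only [div_eq_mul_inv, mul_pow, mul_inv, ← mul_assoc, ← inv_pow,
    inv_eq_sq_of_sq_add_self_add_one_eq_zero hα]
  push_cast
  linear_combination (I * ζ⁻¹ ^ 2 / 3 * (α ^ 2 - α + 1) - ζ⁻¹ * (x - y) / 3) * hα
    - (ζ⁻¹ * (x - y) / 3 * α ^ 2) * pow_three_eq_one_of_sq_add_self_add_one_eq_zero hα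
    + (ζ * ζ⁻¹ ^ 2 * (x - y) * (α ^ 5 + 1) / 3) * I_sq
    - ((x - y) * (α ^ 5 + 1) / 3) * mul_inv_sq_self ζ

theorem Rker_sub_eq_of_lt (h : x < y) :
    Rker α ζ x y - (α / 3) * (-I * α / ζ ^ 2 + ((x : ℂ) - y) / ζ) =
      -(I / 3) * ((exp (I * (α ^ 2 * ζ) * (x - y : ℝ)) - 1 - I * (α ^ 2 * ζ) * (x - y : ℝ))
        / (α ^ 2 * ζ) ^ 2) := by
  rw [Rker, if_neg h.not_ge]
  simp only [div_eq_mul_inv, mul_pow, mul_inv, ← mul_assoc, ← inv_pow,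
    inv_eq_sq_of_sq_add_self_add_one_eq_zero hα]
  push_cast
  linear_combination (-I * ζ⁻¹ ^ 2 / 3 * α ^ 2 * (α ^ 3 + 1)
      + ζ⁻¹ * (x - y) / 3 * α * (α ^ 6 + α ^ 3 + 1))
      * pow_three_eq_one_of_sq_add_self_add_one_eq_zero hα
    - (ζ * ζ⁻¹ ^ 2 * (x - y) * α ^ 10 / 3) * I_sq
    + ((x - y) * α ^ 10 / 3) * mul_inv_sq_self ζ

theorem norm_Rker_sub_le_of_le (him : 0 ≤ ζ.im) (himα : 0 ≤ (α * ζ).im) (h : y ≤ x) :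
    ‖Rker α ζ x y - (α / 3) * (-I * α / ζ ^ 2 + ((x : ℂ) - y) / ζ)‖ ≤ 2 / 3 * (x - y) ^ 2 := by
  have hxy : 0 ≤ x - y := sub_nonneg.mpr h
  have h₁ := norm_exp_I_mul_sub_one_sub_div_sq_le ζ (x - y) (mul_nonneg him hxy)
  have h₂ := norm_exp_I_mul_sub_one_sub_div_sq_le (α * ζ) (x - y) (mul_nonneg himα hxy)
  rw [Rker_sub_eq_of_le hα ζ h]
  calc _ ≤ ‖I / 3‖ * (_ + _) := (norm_mul_le _ _).trans (by gcongr; exact norm_add_le _ _)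
    _ ≤ 1 / 3 * ((x - y) ^ 2 + (x - y) ^ 2) := by gcongr; simp
    _ = 2 / 3 * (x - y) ^ 2 := by ring

theorem norm_Rker_sub_le_of_lt (himα₂ : (α ^ 2 * ζ).im ≤ 0) (h : x < y) :
    ‖Rker α ζ x y - (α / 3) * (-I * α / ζ ^ 2 + ((x : ℂ) - y) / ζ)‖ ≤ 1 / 3 * (x - y) ^ 2 := by
  have h₃ := norm_exp_I_mul_sub_one_sub_div_sq_le (α ^ 2 * ζ) (x - y)
    (mul_nonneg_of_nonpos_of_nonpos himα₂ (by linarith))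
  rw [Rker_sub_eq_of_lt hα ζ h, norm_mul]
  gcongr
  simp

end Kernel

theorem stmt16_general (α : ℂ) (hα : α = Complex.exp (2 * Real.pi * Complex.I / 3))
    (ζ : ℂ) (harg₀ : 0 ≤ ζ.arg) (harg₁ : ζ.arg ≤ Real.pi / 3)
    (x y : ℝ) :
    ‖Rker α ζ x y
        - (α / 3) * (-Complex.I * α / ζ ^ 2 + ((x : ℂ) - (y : ℂ)) / ζ)‖ ≤
      (2 / 3) * |x - y| ^ 2 := by
  subst hα
  have hsum := exp_two_pi_I_div_three_sq_add_self_add_one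
  rw [sq_abs]
  rcases le_or_gt y x with h | h
  · exact norm_Rker_sub_le_of_le hsum ζ (arg_nonneg_iff.mp harg₀)
      (im_exp_two_pi_I_div_three_mul_nonneg harg₀ harg₁) h
  · refine (norm_Rker_sub_le_of_lt hsum ζ
      (im_exp_two_pi_I_div_three_sq_mul_nonpos harg₀ harg₁) h).trans ?_
    gcongr
    norm_num

/-- for `α = exp(2πi/3)` and `ζ ≠ 0` with `0 ≤ arg ζ ≤ π/3`, for all
`x, y ∈ ℝ`, `|R(x,y;ζ) − (α/3)(−iα/ζ² + (x−y)/ζ)| ≤ (2/3)|x−y|²`. -/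
theorem stmt16 (α : ℂ) (hα : α = Complex.exp (2 * Real.pi * Complex.I / 3))
    (ζ : ℂ) (hζ : ζ ≠ 0) (harg₀ : 0 ≤ ζ.arg) (harg₁ : ζ.arg ≤ Real.pi / 3)
    (x y : ℝ) :
    ‖Rker α ζ x y
        - (α / 3) * (-Complex.I * α / ζ ^ 2 + ((x : ℂ) - (y : ℂ)) / ζ)‖ ≤
      (2 / 3) * |x - y| ^ 2 :=
  stmt16_general α hα ζ harg₀ harg₁ x y
end

section
/- Let α = exp(2πi/3) and let ζ ∈ ℂ with 0 < arg ζ < π/3. Define R(x,y;ζ) = (i/3)·(e^{iζ(x−y)}/ζ² + e^{iαζ(x−y)}/(αζ)²) for x ≥ y, and R(x,y;ζ) = −(i/3)·e^{iα²ζ(x−y)}/(α²ζ)² for x < y. Let f : ℝ → ℂ be continuous with compact support and define u(x) = ∫_ℝ R(x,y;ζ)·f(y) dy. Then u is three times continuously differentiable on ℝ, u is square integrable on ℝ, and i·u'''(x) − ζ³·u(x) = f(x) for all x ∈ ℝ (equivalently, ((−i d/dx)³ − ζ³)u = f). -/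
open Complex MeasureTheory

/-! Write `μ₀ = ζ`, `μ₁ = αζ`, `μ₂ = α²ζ`. Then
`u = (i/3) (W⁺(μ₀)/μ₀² + W⁺(μ₁)/μ₁² − W⁻(μ₂)/μ₂²)`, where `W⁺(μ) = causalExpConv f μ` and
`W⁻(μ) = anticausalExpConv f μ` are the convolutions of `f` with `e^{iμt}` restricted to `t ≥ 0`
and to `t < 0`; they solve `W⁺(μ)' = iμ W⁺(μ) + f` and `W⁻(μ)' = iμ W⁻(μ) − f`. Hence each
differentiation multiplies the `k`-th term by `iμₖ` and adds the multiple `(i/3) Σₖ (iμₖ)ⁿ/μₖ²`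
of `f`. Since `1 + α + α² = 0` this jump vanishes for `n = 0, 1` and equals `−i` for `n = 2`,
and `μₖ³ = ζ³` turns the third derivative back into `u`. The condition `0 < arg ζ < π/3` puts
`μ₀, μ₁` in the upper and `μ₂` in the lower half-plane, so every term decays exponentially away
from the support of `f`. -/

open Set

section IntegralDerivative

variable {E : Type*} [NormedAddCommGroup E] [NormedSpace ℝ E] [CompleteSpace E]

theorem hasDerivAt_integral_Iic {g : ℝ → E} (hg : Continuous g) (hgi : Integrable g) (x : ℝ) :
    HasDerivAt (fun t => ∫ y in Iic t, g y) (g x) x := by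
  have hsplit : (fun t => ∫ y in Iic t, g y)
      = fun t => (∫ y in Iic (0 : ℝ), g y) + ∫ y in (0 : ℝ)..t, g y := by
    funext t
    rw [← intervalIntegral.integral_Iic_sub_Iic hgi.integrableOn hgi.integrableOn]
    abel
  rw [hsplit]
  exact (intervalIntegral.integral_hasDerivAt_right hgi.intervalIntegrable
    (hg.stronglyMeasurableAtFilter _ _) hg.continuousAt).const_add _

theorem hasDerivAt_integral_Ioi {g : ℝ → E} (hg : Continuous g) (hgi : Integrable g) (x : ℝ) :
    HasDerivAt (fun t => ∫ y in Ioi t, g y) (-g x) x := by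
  have hsplit : (fun t => ∫ y in Ioi t, g y) = fun t => (∫ y, g y) - ∫ y in Iic t, g y := by
    funext t
    rw [← intervalIntegral.integral_Iic_add_Ioi hgi.integrableOn hgi.integrableOn]
    abel
  rw [hsplit]
  exact (hasDerivAt_integral_Iic hg hgi x).const_sub _

end IntegralDerivative

theorem contDiff_three_of_hasDerivAt {E : Type*} [NormedAddCommGroup E] [NormedSpace ℝ E]
    {g₀ g₁ g₂ g₃ : ℝ → E}
    (h₀ : ∀ x, HasDerivAt g₀ (g₁ x) x) (h₁ : ∀ x, HasDerivAt g₁ (g₂ x) x)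
    (h₂ : ∀ x, HasDerivAt g₂ (g₃ x) x) (hg₃ : Continuous g₃) :
    ContDiff ℝ 3 g₀ ∧ iteratedDeriv 3 g₀ = g₃ := by
  have d₀ : deriv g₀ = g₁ := funext fun x => (h₀ x).deriv
  have d₁ : deriv g₁ = g₂ := funext fun x => (h₁ x).deriv
  have d₂ : deriv g₂ = g₃ := funext fun x => (h₂ x).deriv
  refine ⟨?_, by simp only [iteratedDeriv_succ, iteratedDeriv_zero, d₀, d₁, d₂]⟩
  rw [show (3 : WithTop ℕ∞) = 1 + 1 + 1 from rfl, contDiff_succ_iff_deriv, d₀,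
    contDiff_succ_iff_deriv, d₁, contDiff_one_iff_deriv, d₂]
  exact ⟨fun x => (h₀ x).differentiableAt, by simp,
    fun x => (h₁ x).differentiableAt, by simp, fun x => (h₂ x).differentiableAt, hg₃⟩

theorem integrable_exp_neg_mul_abs {c : ℝ} (hc : 0 < c) :
    Integrable fun x : ℝ => Real.exp (-c * |x|) := by
  refine Integrable.of_integral_ne_zero ?_
  rw [integral_comp_abs (f := fun t => Real.exp (-c * t)),
    integral_exp_mul_Ioi (neg_lt_zero.mpr hc)]
  simp [hc.ne']

theorem memLp_two_of_norm_le_exp_neg_mul_abs {E : Type*} [NormedAddCommGroup E] {g : ℝ → E}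
    (hg : AEStronglyMeasurable g) {C ν : ℝ} (hν : 0 < ν)
    (hbound : ∀ x, ‖g x‖ ≤ C * Real.exp (-ν * |x|)) : MemLp g 2 := by
  have hmaj : MemLp (fun x : ℝ => C * Real.exp (-ν * |x|)) 2 := by
    refine (memLp_two_iff_integrable_sq (by fun_prop)).mpr ?_
    have hsq : (fun x : ℝ => (C * Real.exp (-ν * |x|)) ^ 2)
        = fun x => C ^ 2 * Real.exp (-(2 * ν) * |x|) := by
      funext x
      rw [mul_pow, ← Real.exp_nat_mul]
      ring_nf
    rw [hsq]
    exact (integrable_exp_neg_mul_abs (by positivity)).const_mul _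
  exact hmaj.of_le hg (Filter.Eventually.of_forall fun x =>
    (hbound x).trans (Real.le_norm_self _))

theorem neg_mul_sub_le_of_abs_le {ν r x y : ℝ} (hy : |y| ≤ r) (h : 0 ≤ ν * (x - y)) :
    -(ν * (x - y)) ≤ 2 * |ν| * r - |ν| * |x| := by
  rcases le_total 0 ν with hν | hν <;> rcases le_total 0 x with hx | hx <;>
    simp only [abs_of_nonneg, abs_of_nonpos, *] at * <;>
    rcases abs_le.mp hy with ⟨hy₁, hy₂⟩ <;> nlinarith

theorem norm_cexp_I_mul_sub (μ : ℂ) (x y : ℝ) :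
    ‖cexp (I * μ * (x - y))‖ = Real.exp (-(μ.im * (x - y))) := by
  rw [norm_exp]
  congr 1
  simp [mul_re, mul_im]

section ExpConv

variable {f : ℝ → ℂ}

noncomputable def causalExpConv (f : ℝ → ℂ) (μ : ℂ) (x : ℝ) : ℂ :=
  ∫ y in Iic x, cexp (I * μ * (x - y)) * f y

noncomputable def anticausalExpConv (f : ℝ → ℂ) (μ : ℂ) (x : ℝ) : ℂ :=
  ∫ y in Ioi x, cexp (I * μ * (x - y)) * f y

theorem integrable_mul_of_hasCompactSupport {g : ℝ → ℂ} (hg : Continuous g) (hf : Continuous f)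
    (hfc : HasCompactSupport f) : Integrable fun y => g y * f y :=
  (hg.mul hf).integrable_of_hasCompactSupport hfc.mul_left

theorem cexp_I_mul_sub_mul (μ : ℂ) (x y : ℝ) (a : ℂ) :
    cexp (I * μ * (x - y)) * a = cexp (I * μ * x) * (cexp (-(I * μ) * y) * a) := by
  rw [← mul_assoc, ← Complex.exp_add]
  ring_nf

theorem hasDerivAt_cexp_I_mul_mul {μ : ℂ} {P : ℝ → ℂ} {p : ℂ} {x : ℝ}
    (hP : HasDerivAt P (cexp (-(I * μ) * x) * p) x) :
    HasDerivAt (fun t : ℝ => cexp (I * μ * t) * P t)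
      (I * μ * (cexp (I * μ * x) * P x) + p) x := by
  have hexp : HasDerivAt (fun t : ℝ => cexp (I * μ * t)) (cexp (I * μ * x) * (I * μ)) x := by
    simpa using ((hasDerivAt_id x).ofReal_comp.const_mul (I * μ)).cexp
  have hinv : cexp (I * μ * x) * cexp (-(I * μ) * x) = 1 := by
    rw [← Complex.exp_add]; ring_nf; exact Complex.exp_zero
  refine (hexp.mul hP).congr_deriv ?_
  linear_combination p * hinv

theorem hasDerivAt_causalExpConv (hf : Continuous f) (hfc : HasCompactSupport f) (μ : ℂ)
    (x : ℝ) : HasDerivAt (causalExpConv f μ) (I * μ * causalExpConv f μ x + f x) x := by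
  have hrepr : causalExpConv f μ = fun t : ℝ =>
      cexp (I * μ * t) * ∫ y in Iic t, cexp (-(I * μ) * y) * f y := by
    funext t
    simp only [causalExpConv, cexp_I_mul_sub_mul μ t, integral_const_mul]
  rw [hrepr]
  exact hasDerivAt_cexp_I_mul_mul (hasDerivAt_integral_Iic (by fun_prop)
    (integrable_mul_of_hasCompactSupport (by fun_prop) hf hfc) x)

theorem hasDerivAt_anticausalExpConv (hf : Continuous f) (hfc : HasCompactSupport f) (μ : ℂ)
    (x : ℝ) : HasDerivAt (anticausalExpConv f μ) (I * μ * anticausalExpConv f μ x - f x) x := by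
  have hrepr : anticausalExpConv f μ = fun t : ℝ =>
      cexp (I * μ * t) * ∫ y in Ioi t, cexp (-(I * μ) * y) * f y := by
    funext t
    simp only [anticausalExpConv, cexp_I_mul_sub_mul μ t, integral_const_mul]
  rw [hrepr, sub_eq_add_neg]
  refine hasDerivAt_cexp_I_mul_mul ?_
  rw [mul_neg]
  exact hasDerivAt_integral_Ioi (by fun_prop)
    (integrable_mul_of_hasCompactSupport (by fun_prop) hf hfc) x

theorem norm_setIntegral_cexp_I_mul_sub_mul_le (hfi : Integrable f) {r : ℝ}
    (hr : tsupport f ⊆ Metric.closedBall 0 r) {s : Set ℝ} (hs : MeasurableSet s) (μ : ℂ) (x : ℝ)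
    (hsx : ∀ y ∈ s, 0 ≤ μ.im * (x - y)) :
    ‖∫ y in s, cexp (I * μ * (x - y)) * f y‖
      ≤ (Real.exp (2 * |μ.im| * r) * ∫ y, ‖f y‖) * Real.exp (-|μ.im| * |x|) := by
  have hpoint : ∀ y ∈ s, ‖cexp (I * μ * (x - y)) * f y‖
      ≤ Real.exp (2 * |μ.im| * r) * Real.exp (-|μ.im| * |x|) * ‖f y‖ := by
    intro y hy
    rw [norm_mul, norm_cexp_I_mul_sub]
    by_cases hfy : f y = 0
    · simp [hfy]
    have hyr : |y| ≤ r := by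
      simpa using hr (subset_tsupport f hfy)
    refine mul_le_mul_of_nonneg_right ?_ (norm_nonneg _)
    rw [← Real.exp_add, Real.exp_le_exp]
    linarith [neg_mul_sub_le_of_abs_le hyr (hsx y hy)]
  calc ‖∫ y in s, cexp (I * μ * (x - y)) * f y‖
      ≤ ∫ y in s, Real.exp (2 * |μ.im| * r) * Real.exp (-|μ.im| * |x|) * ‖f y‖ :=
        norm_integral_le_of_norm_le (hfi.norm.const_mul _).integrableOn
          (ae_restrict_of_forall_mem hs hpoint)
    _ ≤ ∫ y, Real.exp (2 * |μ.im| * r) * Real.exp (-|μ.im| * |x|) * ‖f y‖ :=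
        setIntegral_le_integral (hfi.norm.const_mul _)
          (Filter.Eventually.of_forall fun y => by positivity)
    _ = _ := by
        rw [integral_const_mul]
        ring

theorem memLp_causalExpConv (hf : Continuous f) (hfc : HasCompactSupport f) {μ : ℂ}
    (hμ : 0 < μ.im) : MemLp (causalExpConv f μ) 2 := by
  obtain ⟨r, hr⟩ := hfc.isCompact.isBounded.subset_closedBall 0
  refine memLp_two_of_norm_le_exp_neg_mul_abs (C := Real.exp (2 * |μ.im| * r) * ∫ y, ‖f y‖)
    (continuous_iff_continuousAt.mpr fun x =>
      (hasDerivAt_causalExpConv hf hfc μ x).continuousAt).aestronglyMeasurable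
    (abs_pos.mpr hμ.ne') fun x => ?_
  refine norm_setIntegral_cexp_I_mul_sub_mul_le
    (hf.integrable_of_hasCompactSupport hfc) hr measurableSet_Iic μ x fun y hy => ?_
  exact mul_nonneg hμ.le (sub_nonneg.mpr hy)

theorem memLp_anticausalExpConv (hf : Continuous f) (hfc : HasCompactSupport f) {μ : ℂ}
    (hμ : μ.im < 0) : MemLp (anticausalExpConv f μ) 2 := by
  obtain ⟨r, hr⟩ := hfc.isCompact.isBounded.subset_closedBall 0
  refine memLp_two_of_norm_le_exp_neg_mul_abs (C := Real.exp (2 * |μ.im| * r) * ∫ y, ‖f y‖)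
    (continuous_iff_continuousAt.mpr fun x =>
      (hasDerivAt_anticausalExpConv hf hfc μ x).continuousAt).aestronglyMeasurable
    (abs_pos.mpr hμ.ne) fun x => ?_
  refine norm_setIntegral_cexp_I_mul_sub_mul_le
    (hf.integrable_of_hasCompactSupport hfc) hr measurableSet_Ioi μ x fun y hy => ?_
  exact mul_nonneg_of_nonpos_of_nonpos hμ.le (sub_nonpos.mpr hy.le)

end ExpConv

section Resolvent

variable (α ζ : ℂ) (f : ℝ → ℂ)

noncomputable def resolventIterDeriv (n : ℕ) (x : ℝ) : ℂ :=
  I / 3 * ((I * ζ) ^ n / ζ ^ 2 * causalExpConv f ζ x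
    + (I * (α * ζ)) ^ n / (α * ζ) ^ 2 * causalExpConv f (α * ζ) x
    - (I * (α ^ 2 * ζ)) ^ n / (α ^ 2 * ζ) ^ 2 * anticausalExpConv f (α ^ 2 * ζ) x)

noncomputable def resolventJump (n : ℕ) : ℂ :=
  I / 3 * ((I * ζ) ^ n / ζ ^ 2 + (I * (α * ζ)) ^ n / (α * ζ) ^ 2
    + (I * (α ^ 2 * ζ)) ^ n / (α ^ 2 * ζ) ^ 2)

variable {f}

theorem integral_Rker_mul_eq_resolventIterDeriv_zero (hf : Continuous f)
    (hfc : HasCompactSupport f) (x : ℝ) :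
    ∫ y, Rker α ζ x y * f y = resolventIterDeriv α ζ f 0 x := by
  set e : ℂ → ℝ → ℂ := fun μ y => cexp (I * μ * (x - y)) * f y
  have he : ∀ μ, Integrable (e μ) := fun μ =>
    integrable_mul_of_hasCompactSupport (by fun_prop) hf hfc
  have hsplit : (fun y => Rker α ζ x y * f y) = (Iic x).piecewise
      (fun y => I / 3 * (1 / ζ ^ 2 * e ζ y + 1 / (α * ζ) ^ 2 * e (α * ζ) y))
      (fun y => I / 3 * -(1 / (α ^ 2 * ζ) ^ 2 * e (α ^ 2 * ζ) y)) := by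
    funext y
    by_cases hy : y ≤ x
    · simp only [Rker, if_pos hy, piecewise, mem_Iic, e]
      ring_nf
    · simp only [Rker, if_neg hy, piecewise, mem_Iic, e]
      ring_nf
  rw [hsplit, integral_piecewise measurableSet_Iic ?_ ?_, compl_Iic, integral_const_mul,
    integral_const_mul,
    integral_add ((he _).const_mul _).integrableOn ((he _).const_mul _).integrableOn,
    integral_neg, integral_const_mul, integral_const_mul, integral_const_mul]
  · simp only [resolventIterDeriv, causalExpConv, anticausalExpConv, pow_zero, e]
    ring
  · exact ((((he _).const_mul _).add ((he _).const_mul _)).const_mul _).integrableOn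
  · exact (((he _).const_mul _).neg.const_mul _).integrableOn

theorem hasDerivAt_resolventIterDeriv (hf : Continuous f) (hfc : HasCompactSupport f) (n : ℕ)
    (x : ℝ) : HasDerivAt (resolventIterDeriv α ζ f n)
      (resolventIterDeriv α ζ f (n + 1) x + resolventJump α ζ n * f x) x := by
  have h := (((hasDerivAt_causalExpConv hf hfc ζ x).const_mul ((I * ζ) ^ n / ζ ^ 2)).add
    ((hasDerivAt_causalExpConv hf hfc (α * ζ) x).const_mul ((I * (α * ζ)) ^ n / (α * ζ) ^ 2))).sub
    ((hasDerivAt_anticausalExpConv hf hfc (α ^ 2 * ζ) x).const_mul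
      ((I * (α ^ 2 * ζ)) ^ n / (α ^ 2 * ζ) ^ 2))
  refine (h.const_mul (I / 3)).congr_deriv ?_
  simp only [resolventIterDeriv, resolventJump]
  ring

theorem memLp_resolventIterDeriv (hf : Continuous f) (hfc : HasCompactSupport f)
    (h₁ : 0 < ζ.im) (h₂ : 0 < (α * ζ).im) (h₃ : (α ^ 2 * ζ).im < 0) (n : ℕ) :
    MemLp (resolventIterDeriv α ζ f n) 2 :=
  ((((memLp_causalExpConv hf hfc h₁).const_mul _).add
    ((memLp_causalExpConv hf hfc h₂).const_mul _)).sub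
    ((memLp_anticausalExpConv hf hfc h₃).const_mul _)).const_mul _

variable {α ζ}

theorem IsPrimitiveRoot.one_add_add_sq_eq_zero {K : Type*} [CommRing K] [IsDomain K] {ω : K}
    (hω : IsPrimitiveRoot ω 3) : 1 + ω + ω ^ 2 = 0 := by
  simpa [Finset.sum_range_succ] using hω.geom_sum_eq_zero (by norm_num)

theorem resolventJump_zero (hα : IsPrimitiveRoot α 3) (hζ : ζ ≠ 0) :
    resolventJump α ζ 0 = 0 := by
  have h0 := hα.ne_zero (by norm_num)
  simp only [resolventJump]
  field_simp
  linear_combination I * hα.one_add_add_sq_eq_zero + I * α * hα.pow_eq_one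

theorem resolventJump_one (hα : IsPrimitiveRoot α 3) (hζ : ζ ≠ 0) :
    resolventJump α ζ 1 = 0 := by
  have h0 := hα.ne_zero (by norm_num)
  simp only [resolventJump]
  field_simp
  linear_combination I ^ 2 * hα.one_add_add_sq_eq_zero

theorem resolventJump_two (hα : α ≠ 0) (hζ : ζ ≠ 0) : resolventJump α ζ 2 = -I := by
  simp only [resolventJump]
  field_simp
  linear_combination 3 * I_sq

theorem resolventIterDeriv_three (hα : α ^ 3 = 1) (hζ : ζ ≠ 0) (x : ℝ) :
    resolventIterDeriv α ζ f 3 x = -I * ζ ^ 3 * resolventIterDeriv α ζ f 0 x := by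
  have h0 : α ≠ 0 := by rintro rfl; norm_num at hα
  simp only [resolventIterDeriv]
  generalize causalExpConv f ζ x = C₁
  generalize causalExpConv f (α * ζ) x = C₂
  generalize anticausalExpConv f (α ^ 2 * ζ) x = A
  field_simp
  linear_combination (α ^ 4 * C₁ + α ^ 5 * C₂ - α ^ 6 * A) * I_sq
    + (-α ^ 2 * C₂ + (α ^ 3 + 1) * A) * hα

end Resolvent

theorem im_cexp_mul_I_mul (θ : ℝ) (z : ℂ) :
    (cexp (θ * I) * z).im = ‖z‖ * Real.sin (z.arg + θ) := by
  conv_lhs => rw [← norm_mul_exp_arg_mul_I z]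
  rw [mul_left_comm, ← Complex.exp_add, ← add_mul, ← ofReal_add, im_ofReal_mul,
    exp_ofReal_mul_I_im, add_comm θ]

theorem im_pos_of_arg_mem_Ioo {α ζ : ℂ} (hα : α = cexp (2 * Real.pi * I / 3))
    (h₀ : 0 < ζ.arg) (h₁ : ζ.arg < Real.pi / 3) :
    0 < ζ.im ∧ 0 < (α * ζ).im ∧ (α ^ 2 * ζ).im < 0 := by
  have hζ : 0 < ‖ζ‖ := norm_pos_iff.mpr (by rintro rfl; simp at h₀)
  have hα₁ : α = cexp ((2 * Real.pi / 3 : ℝ) * I) := by rw [hα]; push_cast; ring_nf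
  have hα₂ : α ^ 2 = cexp ((4 * Real.pi / 3 : ℝ) * I) := by
    rw [hα₁, ← Complex.exp_nat_mul]; push_cast; ring_nf
  have hπ := Real.pi_pos
  refine ⟨?_, ?_, ?_⟩
  · have h := im_cexp_mul_I_mul 0 ζ
    simp only [ofReal_zero, zero_mul, Complex.exp_zero, one_mul, add_zero] at h
    rw [h]
    exact mul_pos hζ (Real.sin_pos_of_pos_of_lt_pi h₀ (by linarith))
  · rw [hα₁, im_cexp_mul_I_mul]
    exact mul_pos hζ (Real.sin_pos_of_pos_of_lt_pi (by linarith) (by linarith))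
  · rw [hα₂, im_cexp_mul_I_mul,
      show ζ.arg + 4 * Real.pi / 3 = ζ.arg + Real.pi / 3 + Real.pi by ring, Real.sin_add_pi]
    exact mul_neg_of_pos_of_neg hζ
      (neg_neg_of_pos (Real.sin_pos_of_pos_of_lt_pi (by linarith) (by linarith)))

/-- for `α = exp(2πi/3)`, `0 < arg ζ < π/3`, and `f` continuous with
compact support, the function `u(x) = ∫ R(x,y;ζ)f(y) dy` is `C³`, square integrable,
and satisfies `i·u''' − ζ³·u = f` (i.e. `((−i d/dx)³ − ζ³)u = f`). -/
theorem stmt17 (α : ℂ) (hα : α = Complex.exp (2 * Real.pi * Complex.I / 3))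
    (ζ : ℂ) (harg₀ : 0 < ζ.arg) (harg₁ : ζ.arg < Real.pi / 3)
    (f : ℝ → ℂ) (hf : Continuous f) (hfc : HasCompactSupport f)
    (u : ℝ → ℂ) (hu : ∀ x : ℝ, u x = ∫ y : ℝ, Rker α ζ x y * f y) :
    ContDiff ℝ 3 u ∧ MemLp u 2 (volume : Measure ℝ) ∧
      ∀ x : ℝ, Complex.I * iteratedDeriv 3 u x - ζ ^ 3 * u x = f x := by
  have hprim : IsPrimitiveRoot α 3 := by
    rw [hα]; exact_mod_cast Complex.isPrimitiveRoot_exp 3 (by norm_num)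
  obtain ⟨h₁, h₂, h₃⟩ := im_pos_of_arg_mem_Ioo hα harg₀ harg₁
  have hζ : ζ ≠ 0 := by rintro rfl; simp at h₁
  have hu₀ : u = resolventIterDeriv α ζ f 0 :=
    funext fun x => (hu x).trans (integral_Rker_mul_eq_resolventIterDeriv_zero α ζ hf hfc x)
  have hR := hasDerivAt_resolventIterDeriv α ζ hf hfc
  obtain ⟨hC, hD⟩ := contDiff_three_of_hasDerivAt
    (g₃ := fun x => -I * ζ ^ 3 * resolventIterDeriv α ζ f 0 x - I * f x)
    (fun x => by simpa [resolventJump_zero hprim hζ] using hR 0 x)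
    (fun x => by simpa [resolventJump_one hprim hζ] using hR 1 x)
    (fun x => by
      simpa [resolventJump_two (hprim.ne_zero (by norm_num)) hζ,
        resolventIterDeriv_three hprim.pow_eq_one hζ, sub_eq_add_neg] using hR 2 x)
    (((continuous_iff_continuousAt.mpr fun x => (hR 0 x).continuousAt).const_mul _).sub
      (hf.const_mul _))
  subst hu₀
  refine ⟨hC, memLp_resolventIterDeriv α ζ hf hfc h₁ h₂ h₃ 0, fun x => ?_⟩
  rw [hD]
  linear_combination (-(ζ ^ 3 * resolventIterDeriv α ζ f 0 x) - f x) * I_sq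
end

section
/- For every ε > 0 there exist a real number κ with 0 < κ < ε, a continuous function V : ℝ → ℝ with V(x) = 0 for all |x| ≥ 1 and sup_{x∈ℝ} |V(x)| < ε, and a function u : ℝ → ℝ which is three times continuously differentiable, square integrable on ℝ, and not identically zero, such that −u'''(x) + V(x)·u(x) = κ³·u(x) for all x ∈ ℝ. In other words, arbitrarily small continuous compactly supported potentials produce an eigenvalue κ³ ≠ 0 of the operator −d³/dx³ + V arbitrarily close to zero. -/
/-!
For `k > 0` the equation `u''' = -k³ u` has the solution `e^{-kx}`, decaying at `+∞`, and the
solution `Re e^{kζx}` with `ζ = e^{iπ/3}`, decaying at `-∞`. Gluing them with a smooth cutoff `χ`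
that jumps from `1` to `0` inside `[-1/2, 1/2]` gives a square-integrable
`u = e^{-kx} + χ (Re e^{kζx} - e^{-kx})` with `u''' + k³ u = W`, where `W` collects the Leibniz
terms containing derivatives of `χ` and so vanishes outside `[-1/2, 1/2]`. Then `V = W / u`
solves `-u''' + V u = k³ u`. Both `u` and `W` depend continuously on `(k, x)`, with `u = 1` and
`W = 0` at `k = 0`; by compactness of `[-1, 1]`, for small `k` we get `u > 1/2` and `|W|` small
on `[-1, 1]`, hence `sup |V|` small.
-/

open MeasureTheory Set Filter Topology Complex Real

namespace SmallPotential
noncomputable section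

def reExp (c μ : ℂ) (x : ℝ) : ℝ := (c * cexp (μ * x)).re

section reExp

variable (c μ : ℂ)

theorem hasDerivAt_reExp (x : ℝ) : HasDerivAt (reExp c μ) (reExp (c * μ) μ x) x := by
  have h := (((hasDerivAt_id (x : ℂ)).const_mul μ).cexp.const_mul c).comp_ofReal
  rw [show reExp (c * μ) μ x = reCLM (c * (cexp (μ * id (x : ℂ)) * (μ * 1))) by
    simp only [reExp, reCLM_apply, id, mul_one]; ring_nf]
  exact reCLM.hasFDerivAt.comp_hasDerivAt x h

theorem deriv_reExp : deriv (reExp c μ) = reExp (c * μ) μ :=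
  funext fun x => (hasDerivAt_reExp c μ x).deriv

theorem iteratedDeriv_reExp (n : ℕ) : iteratedDeriv n (reExp c μ) = reExp (c * μ ^ n) μ := by
  induction n with
  | zero => simp
  | succ n ih => rw [iteratedDeriv_succ, ih, deriv_reExp, pow_succ, mul_assoc]

theorem contDiff_reExp {n : WithTop ℕ∞} : ContDiff ℝ n (reExp c μ) :=
  reCLM.contDiff.comp
    (contDiff_const.mul (contDiff_exp.comp (contDiff_const.mul ofRealCLM.contDiff)))

theorem reExp_mul_ofReal (a x : ℝ) : reExp (c * a) μ x = a * reExp c μ x := by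
  rw [reExp, reExp, mul_right_comm, re_mul_ofReal, mul_comm]

theorem sq_reExp_le (x : ℝ) : reExp c μ x ^ 2 ≤ ‖c‖ ^ 2 * Real.exp (2 * μ.re * x) := by
  have h : |reExp c μ x| ≤ ‖c‖ * Real.exp (μ.re * x) := by
    simpa [reExp, Complex.norm_exp] using Complex.abs_re_le_norm (c * cexp (μ * x))
  calc reExp c μ x ^ 2 ≤ (‖c‖ * Real.exp (μ.re * x)) ^ 2 := by
        simpa using pow_le_pow_left₀ (abs_nonneg _) h 2
    _ = _ := by rw [mul_pow, ← Real.exp_nat_mul]; ring_nf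

theorem iteratedDeriv_three_reExp {a : ℝ} (hμ : μ ^ 3 = a) (x : ℝ) :
    iteratedDeriv 3 (reExp c μ) x = a * reExp c μ x := by
  rw [iteratedDeriv_reExp, hμ, reExp_mul_ofReal]

theorem integrableOn_sq_reExp {s : Set ℝ}
    (h : IntegrableOn (fun x => Real.exp (2 * μ.re * x)) s) :
    IntegrableOn (fun x => reExp c μ x ^ 2) s :=
  Integrable.mono' (h.const_mul (‖c‖ ^ 2))
    ((contDiff_reExp c μ (n := 0)).continuous.pow 2).aestronglyMeasurable
    (Eventually.of_forall fun x => by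
      rw [Real.norm_of_nonneg (sq_nonneg _)]
      exact sq_reExp_le c μ x)

end reExp

theorem integrable_of_integrableOn_Iic_of_integrableOn_Ioi {f : ℝ → ℝ} (hf : Continuous f)
    {a b : ℝ} (ha : IntegrableOn f (Iic a)) (hb : IntegrableOn f (Ioi b)) : Integrable f := by
  refine integrableOn_univ.mp ((ha.union (hf.integrableOn_Icc (a := a) (b := b))).union hb
    |>.mono_set fun x _ => ?_)
  by_cases hxa : x ≤ a
  · exact Or.inl (Or.inl hxa)
  by_cases hxb : x ≤ b
  · exact Or.inl (Or.inr ⟨(not_le.mp hxa).le, hxb⟩)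
  · exact Or.inr (not_le.mp hxb)

theorem exists_potential_mul_eq {u W : ℝ → ℝ} {ε : ℝ} (hu : Continuous u) (hW : Continuous W)
    (hε : 0 < ε) (hW_zero : ∀ x, 1 ≤ |x| → W x = 0)
    (hsmall : ∀ x ∈ Icc (-1 : ℝ) 1, |W x| < ε / 2 ∧ 1 / 2 < u x) :
    ∃ V : ℝ → ℝ, Continuous V ∧ (∀ x, 1 ≤ |x| → V x = 0) ∧ (∀ x, |V x| < ε) ∧
      ∀ x, V x * u x = W x := by
  -- `u` may vanish outside `[-1, 1]`, where `W` does; the `max` keeps `V` continuous there.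
  have hpos (x : ℝ) : 0 < max (u x) (1 / 2) := lt_max_of_lt_right one_half_pos
  have hW_out (x : ℝ) (hx : x ∉ Icc (-1 : ℝ) 1) : W x = 0 :=
    hW_zero x (by_contra fun h => hx (abs_le.mp (not_le.mp h).le))
  refine ⟨fun x => W x / max (u x) (1 / 2),
    hW.div (hu.max continuous_const) fun x => (hpos x).ne', fun x hx => by simp [hW_zero x hx],
    fun x => ?_, fun x => ?_⟩ <;> dsimp only <;> by_cases hx : x ∈ Icc (-1 : ℝ) 1
  · obtain ⟨hWx, hux⟩ := hsmall x hx
    rw [max_eq_left hux.le, abs_div, abs_of_pos (by linarith : 0 < u x), div_lt_iff₀ (by linarith)]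
    nlinarith [abs_nonneg (W x)]
  · simp [hW_out x hx, hε]
  · rw [max_eq_left (hsmall x hx).2.le, div_mul_cancel₀ _ (by linarith [(hsmall x hx).2])]
  · simp [hW_out x hx]

def glueDefect (χ D : ℝ → ℝ) (x : ℝ) : ℝ :=
  ∑ i ∈ Finset.range 3, (Nat.choose 3 (i + 1) : ℝ) * iteratedDeriv (i + 1) χ x *
    iteratedDeriv (3 - (i + 1)) D x

theorem iteratedDeriv_three_glue {χ f g : ℝ → ℝ} {a : ℝ} (hχ : ContDiff ℝ 3 χ)
    (hf : ContDiff ℝ 3 f) (hg : ContDiff ℝ 3 g) (hf' : ∀ x, iteratedDeriv 3 f x = a * f x)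
    (hg' : ∀ x, iteratedDeriv 3 g x = a * g x) (x : ℝ) :
    iteratedDeriv 3 (g + χ * (f - g)) x = a * (g + χ * (f - g)) x + glueDefect χ (f - g) x := by
  have hD : ContDiff ℝ 3 (f - g) := hf.sub hg
  have hχD : ContDiff ℝ 3 (χ * (f - g)) := hχ.mul hD
  rw [iteratedDeriv_add hg.contDiffAt hχD.contDiffAt,
    iteratedDeriv_mul hχ.contDiffAt hD.contDiffAt, Finset.sum_range_succ',
    iteratedDeriv_sub hf.contDiffAt hg.contDiffAt, hf', hg', glueDefect]
  simp only [Pi.add_apply, Pi.mul_apply, Pi.sub_apply, Nat.choose_zero_right, iteratedDeriv_zero]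
  ring

theorem glueDefect_eq_zero_of_eventuallyEq {χ D : ℝ → ℝ} {x c : ℝ}
    (h : χ =ᶠ[𝓝 x] fun _ => c) : glueDefect χ D x = 0 := by
  simp [glueDefect, h.iteratedDeriv_eq, iteratedDeriv_const]

def ζ₆ : ℂ := cexp (π / 3 * I)

theorem ζ₆_pow_three : ζ₆ ^ 3 = -1 := by
  rw [ζ₆, ← Complex.exp_nat_mul, show ((3 : ℕ) : ℂ) * (π / 3 * I) = π * I by push_cast; ring,
    exp_pi_mul_I]

theorem ζ₆_re : ζ₆.re = 1 / 2 := by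
  rw [ζ₆, show (π / 3 : ℂ) = ((π / 3 : ℝ) : ℂ) by push_cast; rfl, exp_ofReal_mul_I_re,
    Real.cos_pi_div_three]

def cutoff (x : ℝ) : ℝ := Real.smoothTransition (1 / 2 - x)

theorem contDiff_cutoff {n : ℕ∞} : ContDiff ℝ n cutoff :=
  Real.smoothTransition.contDiff.comp (contDiff_const.sub contDiff_id)

theorem cutoff_of_le {x : ℝ} (hx : x ≤ -(1 / 2)) : cutoff x = 1 :=
  Real.smoothTransition.one_of_one_le (by linarith)

theorem cutoff_of_ge {x : ℝ} (hx : 1 / 2 ≤ x) : cutoff x = 0 :=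
  Real.smoothTransition.zero_of_nonpos (by linarith)

theorem cutoff_eventuallyEq_const {x : ℝ} (hx : 1 / 2 < |x|) :
    ∃ c, cutoff =ᶠ[𝓝 x] fun _ => c := by
  rcases lt_abs.mp hx with hx | hx
  · exact ⟨0, eventually_of_mem (Ioi_mem_nhds hx) fun y hy => cutoff_of_ge (le_of_lt hy)⟩
  · exact ⟨1, eventually_of_mem (Iio_mem_nhds (by linarith : x < -(1 / 2)))
      fun y hy => cutoff_of_le (le_of_lt hy)⟩

/-- `rightSol k` and `leftSol k` solve `y''' = -k³ y` and, for `k > 0`, decay at `+∞` and `-∞`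
respectively, since `Re (-k) < 0 < Re (k ζ₆)`. -/
def rightSol (k : ℝ) : ℝ → ℝ := reExp 1 (-k)

def leftSol (k : ℝ) : ℝ → ℝ := reExp 1 (k * ζ₆)

def glued (k : ℝ) : ℝ → ℝ := rightSol k + cutoff * (leftSol k - rightSol k)

def defect (k : ℝ) : ℝ → ℝ := glueDefect cutoff (leftSol k - rightSol k)

theorem contDiff_glued (k : ℝ) : ContDiff ℝ 3 (glued k) :=
  (contDiff_reExp _ _).add (contDiff_cutoff.mul ((contDiff_reExp _ _).sub (contDiff_reExp _ _)))

theorem iteratedDeriv_three_glued (k x : ℝ) :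
    iteratedDeriv 3 (glued k) x = -k ^ 3 * glued k x + defect k x :=
  iteratedDeriv_three_glue contDiff_cutoff (contDiff_reExp _ _) (contDiff_reExp _ _)
    (iteratedDeriv_three_reExp _ _ (by push_cast; rw [mul_pow, ζ₆_pow_three]; ring))
    (iteratedDeriv_three_reExp _ _ (by push_cast; ring)) x

theorem defect_eq_zero {k x : ℝ} (hx : 1 / 2 < |x|) : defect k x = 0 :=
  let ⟨_, hc⟩ := cutoff_eventuallyEq_const hx
  glueDefect_eq_zero_of_eventuallyEq hc

theorem integrable_sq_glued {k : ℝ} (hk : 0 < k) : Integrable fun x => glued k x ^ 2 := by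
  have hleft : IntegrableOn (fun x => glued k x ^ 2) (Iic (-(1 / 2))) :=
    (integrableOn_sq_reExp 1 (k * ζ₆) (integrableOn_exp_mul_Iic (by simp [ζ₆_re, hk]) _)).congr_fun
      (fun x hx => by simp [glued, cutoff_of_le hx, leftSol]) measurableSet_Iic
  have hright : IntegrableOn (fun x => glued k x ^ 2) (Ioi (1 / 2)) :=
    (integrableOn_sq_reExp 1 (-k) (integrableOn_exp_mul_Ioi (by simp [hk]) _)).congr_fun
      (fun x hx => by simp [glued, cutoff_of_ge (le_of_lt hx), rightSol]) measurableSet_Ioi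
  exact integrable_of_integrableOn_Iic_of_integrableOn_Ioi
    ((contDiff_glued k).continuous.pow 2) hleft hright

theorem continuous_iteratedDeriv_leftSol_sub_rightSol (n : ℕ) :
    Continuous fun p : ℝ × ℝ => iteratedDeriv n (leftSol p.1 - rightSol p.1) p.2 := by
  have h (k : ℝ) : iteratedDeriv n (leftSol k - rightSol k) =
      reExp (1 * (k * ζ₆) ^ n) (k * ζ₆) - reExp (1 * (-k) ^ n) (-k) := funext fun x => by
    rw [leftSol, rightSol,
      iteratedDeriv_sub (contDiff_reExp _ _).contDiffAt (contDiff_reExp _ _).contDiffAt,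
      iteratedDeriv_reExp, iteratedDeriv_reExp, Pi.sub_apply]
  simp_rw [h, Pi.sub_apply, reExp]
  fun_prop

theorem continuous_defect : Continuous (Function.uncurry defect) := by
  simp only [Function.uncurry_def, defect, glueDefect]
  exact continuous_finsetSum _ fun i _ =>
    (continuous_const.mul ((contDiff_cutoff (n := i + 1)).continuous_iteratedDeriv' _
      |>.comp continuous_snd)).mul (continuous_iteratedDeriv_leftSol_sub_rightSol _)

theorem continuous_glued : Continuous (Function.uncurry glued) := by
  have := (contDiff_cutoff (n := 0)).continuous
  simp only [Function.uncurry_def, glued, Pi.add_apply, Pi.mul_apply, Pi.sub_apply, leftSol,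
    rightSol, reExp]
  fun_prop

theorem defect_zero : defect 0 = 0 := by
  funext x
  simp [defect, glueDefect, leftSol, rightSol]

theorem glued_zero (x : ℝ) : glued 0 x = 1 := by
  simp [glued, leftSol, rightSol, reExp]

theorem eventually_forall_defect_lt_and_glued_gt {δ : ℝ} (hδ : 0 < δ) :
    ∀ᶠ k in 𝓝 0, ∀ x ∈ Icc (-1 : ℝ) 1, |defect k x| < δ ∧ 1 / 2 < glued k x :=
  isCompact_Icc.eventually_forall_of_forall_eventually fun x _ =>
    ((isOpen_lt (continuous_abs.comp continuous_defect) continuous_const).inter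
      (isOpen_lt continuous_const continuous_glued)).mem_nhds
      ⟨by simp [defect_zero, hδ], by norm_num [glued_zero]⟩

end
end SmallPotential

open SmallPotential

/-- arbitrarily small continuous potentials supported in `[−1,1]` produce
a nonzero eigenvalue `κ³` of `−d³/dx³ + V` arbitrarily close to zero: for every `ε > 0`
there are `0 < κ < ε`, a continuous `V` vanishing for `|x| ≥ 1` with `sup|V| < ε`, and a
nonzero square-integrable `C³` function `u` with `−u''' + V·u = κ³·u`. -/
theorem stmt19 :
    ∀ ε : ℝ, 0 < ε →
      ∃ κ : ℝ, 0 < κ ∧ κ < ε ∧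
        ∃ V : ℝ → ℝ, Continuous V ∧ (∀ x : ℝ, 1 ≤ |x| → V x = 0) ∧
          (∀ x : ℝ, |V x| < ε) ∧
          ∃ u : ℝ → ℝ, ContDiff ℝ 3 u ∧
            Integrable (fun x : ℝ => (u x) ^ 2) ∧ u ≠ 0 ∧
            ∀ x : ℝ, -(iteratedDeriv 3 u x) + V x * u x = κ ^ 3 * u x := by
  intro ε hε
  obtain ⟨k, hk, hk0, hkε⟩ := ((eventually_forall_defect_lt_and_glued_gt (half_pos hε)).filter_mono
    nhdsWithin_le_nhds |>.and (Ioo_mem_nhdsGT hε)).exists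
  obtain ⟨V, hV, hV_zero, hV_lt, hVu⟩ := exists_potential_mul_eq (contDiff_glued k).continuous
    (continuous_defect.uncurry_left k) hε
    (fun x hx => defect_eq_zero (by linarith)) hk
  refine ⟨k, hk0, hkε, V, hV, hV_zero, hV_lt, glued k, contDiff_glued k, integrable_sq_glued hk0,
    fun h => ?_, fun x => ?_⟩
  · exact absurd (hk 0 (by norm_num)).2 (by norm_num [h])
  · rw [iteratedDeriv_three_glued, hVu x]
    ring
end
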